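/- arXiv:2107.13196 — 8 statements merged into one kernel-verified Lean document; each statement's English description precedes it below -/
import Mathlib

section
/- Every connected graph G contains a vertex w such that for every edge e of G, the component of G − e containing w has at least |V(G)|/2 vertices. -/
open SimpleGraph

private lemma walk_reach_del {V : Type} {G : SimpleGraph V} {x y v : V}
    (p : G.Walk v x) :
    (G.deleteEdges {s(x,y)}).Reachable v x ∨ (G.deleteEdges {s(x,y)}).Reachable v y := by
  induction p with
  | nil => exact Or.inl (Reachable.refl _)
  | @cons u v' xx h q ih =>
    by_cases hc : s(u, v') = s(xx, y)
    · rw [Sym2.eq_iff] at hc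
      rcases hc with ⟨rfl, rfl⟩ | ⟨rfl, rfl⟩
      · exact Or.inl (Reachable.refl _)
      · exact Or.inr (Reachable.refl _)
    · have hadj : (G.deleteEdges {s(xx,y)}).Adj u v' := by
        rw [SimpleGraph.deleteEdges_adj]
        exact ⟨h, by simpa using hc⟩
      rcases ih with h1 | h1
      · exact Or.inl (hadj.reachable.trans h1)
      · exact Or.inr (hadj.reachable.trans h1)

private lemma comp_union {V : Type} {G : SimpleGraph V} (hG : G.Connected) (x y : V) :
    ((G.deleteEdges {s(x,y)}).connectedComponentMk x).supp ∪
      ((G.deleteEdges {s(x,y)}).connectedComponentMk y).supp = Set.univ := by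
  ext v
  simp only [Set.mem_union, Set.mem_univ, iff_true, ConnectedComponent.mem_supp_iff,
    ConnectedComponent.eq]
  exact walk_reach_del (hG.preconnected v x).some

private lemma reach_del_of_comp_avoid {V : Type} {G : SimpleGraph V}
    {e : Sym2 V} {c d v z : V}
    (r : (G.deleteEdges {e}).Reachable v z)
    (hc : ¬ (G.deleteEdges {e}).Reachable v c) :
    (G.deleteEdges {s(c,d)}).Reachable v z := by
  classical
  obtain ⟨p⟩ := r
  have hfe : ∀ e' ∈ p.edges, e' ∉ ({s(c,d)} : Set (Sym2 V)) := by
    intro e' he' hmem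
    rw [Set.mem_singleton_iff] at hmem; subst hmem
    have hcs : c ∈ p.support := Walk.fst_mem_support_of_mem_edges p he'
    exact hc (p.takeUntil c hcs).reachable
  have hle : (G.deleteEdges {e}).deleteEdges {s(c,d)} ≤ G.deleteEdges {s(c,d)} := by
    intro u w h
    rw [SimpleGraph.deleteEdges_adj] at h ⊢
    rw [SimpleGraph.deleteEdges_adj] at h
    exact ⟨h.1.1, h.2⟩
  exact (p.toDeleteEdges {s(c,d)} hfe).reachable.mono hle

private lemma card_bound {V : Type} [Fintype V] {G : SimpleGraph V} (hG : G.Connected)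
    (x y : V) :
    Fintype.card V ≤ ((G.deleteEdges {s(x,y)}).connectedComponentMk x).supp.ncard +
      ((G.deleteEdges {s(x,y)}).connectedComponentMk y).supp.ncard := by
  calc Fintype.card V = (Set.univ : Set V).ncard := by
        rw [Set.ncard_univ, Nat.card_eq_fintype_card]
    _ = (((G.deleteEdges {s(x,y)}).connectedComponentMk x).supp ∪
          ((G.deleteEdges {s(x,y)}).connectedComponentMk y).supp).ncard := by
        rw [comp_union hG]
    _ ≤ _ := Set.ncard_union_le _ _

/-- If the component of `x` in `G - ab` is small, some endpoint `c` of `ab` has a big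
component not containing `x`. -/
private lemma exists_big_side {V : Type} [Fintype V] {G : SimpleGraph V} (hG : G.Connected)
    {x a b : V}
    (hsmall : 2 * ((G.deleteEdges {s(a,b)}).connectedComponentMk x).supp.ncard <
      Fintype.card V) :
    ∃ c d, s(c,d) = s(a,b) ∧
      Fintype.card V ≤ 2 * ((G.deleteEdges {s(a,b)}).connectedComponentMk c).supp.ncard ∧
      (G.deleteEdges {s(a,b)}).connectedComponentMk c ≠
        (G.deleteEdges {s(a,b)}).connectedComponentMk x := by
  have hsum := card_bound hG a b
  have hx : x ∈ (((G.deleteEdges {s(a,b)}).connectedComponentMk a).supp ∪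
      ((G.deleteEdges {s(a,b)}).connectedComponentMk b).supp) := by
    rw [comp_union hG]; trivial
  rcases hx with hx | hx
  · rw [ConnectedComponent.mem_supp_iff] at hx
    refine ⟨b, a, Sym2.eq_swap, ?_, ?_⟩
    · rw [← hx] at hsum; omega
    · intro h
      rw [← hx, h] at hsum
      omega
  · rw [ConnectedComponent.mem_supp_iff] at hx
    refine ⟨a, b, rfl, ?_, ?_⟩
    · rw [← hx] at hsum; omega
    · intro h
      rw [← hx, h] at hsum
      omega

/-- Every connected graph `G` contains a vertex `w` such that for every edge `e` of `G`,
the component of `G − e` containing `w` has at least `|V(G)|/2` vertices. -/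
theorem stmt0 {V : Type} [Fintype V] (G : SimpleGraph V) (hG : G.Connected) :
    ∃ w : V, ∀ e ∈ G.edgeSet,
      2 * ((G.deleteEdges {e}).connectedComponentMk w).supp.ncard ≥ Fintype.card V := by
  classical
  by_contra hcon
  push_neg at hcon
  set n := Fintype.card V with hn
  -- the set of sizes of "big sides"
  set A : Set ℕ := { k | ∃ x y : V, G.Adj x y ∧
      n ≤ 2 * ((G.deleteEdges {s(x,y)}).connectedComponentMk x).supp.ncard ∧
      ((G.deleteEdges {s(x,y)}).connectedComponentMk x).supp.ncard = k } with hA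
  -- A is nonempty
  have hANe : A.Nonempty := by
    have hne : Nonempty V := hG.nonempty
    obtain ⟨x₀⟩ := hne
    obtain ⟨e, he, hsm⟩ := hcon x₀
    obtain ⟨⟨a, b⟩, rfl⟩ := e.exists_rep
    obtain ⟨c, d, hcd, hbig, hne'⟩ := exists_big_side hG hsm
    refine ⟨((G.deleteEdges {s(a,b)}).connectedComponentMk c).supp.ncard, c, d, ?_, ?_, ?_⟩
    · rw [← SimpleGraph.mem_edgeSet, hcd]; exact he
    · rw [hcd]; exact hbig
    · rw [hcd]
  obtain ⟨x, y, hadj, hbig, hk⟩ := Nat.sInf_mem hANe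
  obtain ⟨f, hf, hsmall⟩ := hcon x
  obtain ⟨⟨a, b⟩, rfl⟩ := f.exists_rep
  have hadjab : G.Adj a b := hf
  have hsmall' : 2 * ((G.deleteEdges {s(a,b)}).connectedComponentMk x).supp.ncard < n :=
    hsmall
  clear hsmall
  obtain ⟨c, d, hcd, hbigc, hnec⟩ := exists_big_side hG hsmall'
  -- the two edges differ
  have hfe : s(a,b) ≠ s(x,y) := by
    intro h
    rw [h] at hsmall'
    omega
  -- both endpoints of f lie in S₀
  have step2 : ∀ g h' : V, s(g,h') = s(a,b) →
      g ∈ ((G.deleteEdges {s(x,y)}).connectedComponentMk x).supp := by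
    intro g h' hgh
    by_contra hg
    rw [ConnectedComponent.mem_supp_iff] at hg
    have hsub : ((G.deleteEdges {s(x,y)}).connectedComponentMk x).supp ⊆
        ((G.deleteEdges {s(a,b)}).connectedComponentMk x).supp := by
      intro v hv
      rw [ConnectedComponent.mem_supp_iff, ConnectedComponent.eq] at hv ⊢
      have hnr : ¬ (G.deleteEdges {s(x,y)}).Reachable v g := by
        intro hr
        exact hg ((ConnectedComponent.sound hr).symm.trans (ConnectedComponent.sound hv))
      have := reach_del_of_comp_avoid (d := h') hv hnr
      rwa [hgh] at this
    have hle := Set.ncard_le_ncard hsub (Set.toFinite _)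
    omega
  have hcS : (G.deleteEdges {s(x,y)}).connectedComponentMk c =
      (G.deleteEdges {s(x,y)}).connectedComponentMk x := by
    have := step2 c d hcd
    rwa [ConnectedComponent.mem_supp_iff] at this
  have hcx : (G.deleteEdges {s(x,y)}).Reachable c x := (ConnectedComponent.eq).mp hcS
  -- the big side of f is strictly inside S₀
  have hsub : ((G.deleteEdges {s(a,b)}).connectedComponentMk c).supp ⊆
      ((G.deleteEdges {s(x,y)}).connectedComponentMk x).supp := by
    intro v hv
    rw [ConnectedComponent.mem_supp_iff] at hv
    by_contra hvS
    rw [ConnectedComponent.mem_supp_iff, ConnectedComponent.eq] at hvS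
    rcases walk_reach_del (y := y) (hG.preconnected v x).some with hr | hr
    · exact hvS hr
    · have hnr : ¬ (G.deleteEdges {s(x,y)}).Reachable v c := fun hr' =>
        hvS (hr'.trans hcx)
      have hry : (G.deleteEdges {s(a,b)}).Reachable v y := by
        have := reach_del_of_comp_avoid (c := c) (d := d) hr hnr
        rwa [hcd] at this
      have hyx : (G.deleteEdges {s(a,b)}).Adj y x := by
        rw [SimpleGraph.deleteEdges_adj]
        refine ⟨hadj.symm, ?_⟩
        simp only [Set.mem_singleton_iff]
        intro h
        exact hfe (h.symm.trans Sym2.eq_swap)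
      have : (G.deleteEdges {s(a,b)}).Reachable v x := hry.trans hyx.reachable
      exact hnec (hv.symm.trans (ConnectedComponent.sound this))
  have hxnot : x ∉ ((G.deleteEdges {s(a,b)}).connectedComponentMk c).supp := by
    rw [ConnectedComponent.mem_supp_iff]
    intro h
    exact hnec h.symm
  have hss : ((G.deleteEdges {s(a,b)}).connectedComponentMk c).supp ⊂
      ((G.deleteEdges {s(x,y)}).connectedComponentMk x).supp := by
    refine ⟨hsub, fun hsup => hxnot (hsup ?_)⟩
    rw [ConnectedComponent.mem_supp_iff]
  have hlt := Set.ncard_lt_ncard hss (Set.toFinite _)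
  have hmem : ((G.deleteEdges {s(a,b)}).connectedComponentMk c).supp.ncard ∈ A := by
    refine ⟨c, d, ?_, ?_, ?_⟩
    · rw [← SimpleGraph.mem_edgeSet, hcd]; exact hf
    · rw [hcd]; exact hbigc
    · rw [hcd]
  have hge := Nat.sInf_le hmem
  omega
end

section
/- Let G be a connected graph of order n ≥ 3 and let q be an integer with 2 ≤ q ≤ n−1. Then ar(G, T_q) ≥ ℓ_q(G) + 1, where ar(G, T_q) is the anti-Ramsey number for the family T_q of trees with q edges. -/
open SimpleGraph

variable {V : Type} [Fintype V]

/-- There is a rainbow (w.r.t. the coloring `c`) subtree of `G` with exactly `q` edges. -/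
def hasRainbowTree (G : SimpleGraph V) (c : Sym2 V → ℕ) (q : ℕ) : Prop :=
  ∃ H : G.Subgraph, H.coe.IsTree ∧ H.edgeSet.ncard = q ∧ Set.InjOn c H.edgeSet

/-- The anti-Ramsey number `ar(G, 𝒯_q)`: the maximum `t` such that there is a surjective
`t`-edge-coloring of `G` (colors `0, …, t-1`, each used on some edge) admitting no rainbow
tree with `q` edges. -/
noncomputable def ar (G : SimpleGraph V) (q : ℕ) : ℕ :=
  sSup {t | ∃ c : Sym2 V → ℕ, c '' G.edgeSet = Set.Iio t ∧ ¬ hasRainbowTree G c q}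

/-- `H` is a disconnected spanning subgraph of `G` in which any two components together
have at most `q` vertices. -/
def inS (G H : SimpleGraph V) (q : ℕ) : Prop :=
  H ≤ G ∧ ¬ H.Connected ∧
    ∀ C D : H.ConnectedComponent, C ≠ D → C.supp.ncard + D.supp.ncard ≤ q

/-- `ℓ_q(G)`: the maximum number of edges of a graph in `S_q(G)`. -/
noncomputable def ell (G : SimpleGraph V) (q : ℕ) : ℕ :=
  sSup {m | ∃ H : SimpleGraph V, inS G H q ∧ H.edgeSet.ncard = m}

set_option linter.unusedSectionVars false in
lemma walk_transfer {G : SimpleGraph V} (H : SimpleGraph V) (T : G.Subgraph) (a b : V)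
    (hT : ∀ e ∈ T.edgeSet, e ∈ H.edgeSet ∨ e = s(a, b)) :
    ∀ {x y : T.verts} (_ : T.coe.Walk x y),
      (H.Reachable a x ∨ H.Reachable b x) → (H.Reachable a y ∨ H.Reachable b y) := by
  intro x y w
  induction w with
  | nil => exact id
  | @cons u v w h p ih =>
    intro hx
    apply ih
    have hadj : T.Adj ↑u ↑v := h
    rcases hT _ (Subgraph.mem_edgeSet.mpr hadj) with h1 | h1
    · have hR : H.Reachable ↑u ↑v := (H.mem_edgeSet.mp h1).reachable
      rcases hx with hx | hx
      · exact Or.inl (hx.trans hR)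
      · exact Or.inr (hx.trans hR)
    · rcases Sym2.eq_iff.mp h1 with ⟨h2, h3⟩ | ⟨h2, h3⟩
      · exact Or.inr (by rw [h3])
      · exact Or.inl (by rw [h3])

/-- Key step: given `H ∈ S_q(G)` with `m` edges, the coloring giving each `H`-edge its own
color and all other edges one extra color has no rainbow tree with `q` edges. -/
lemma no_rainbow {G H : SimpleGraph V} {q m : ℕ} (hH : inS G H q) (hq2 : 2 ≤ q)
    (hm : H.edgeSet.ncard = m) (c : Sym2 V → ℕ)
    (hcH : Set.InjOn c H.edgeSet) (hcHlt : ∀ e ∈ H.edgeSet, c e < m)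
    (hcm : ∀ e, e ∉ H.edgeSet → c e = m) :
    ¬ hasRainbowTree G c q := by
  rintro ⟨T, hTree, hTq, hinj⟩
  classical
  haveI : Fintype ↥T.verts := (Set.toFinite _).fintype
  haveI : Fintype ↥T.coe.edgeSet := (Set.toFinite _).fintype
  -- number of vertices of the tree is q + 1
  have hcard : T.verts.ncard = q + 1 := by
    have h1 := hTree.card_edgeFinset
    have h2 : T.coe.edgeSet.ncard = T.edgeSet.ncard := by
      rw [← Subgraph.image_coe_edgeSet_coe,
        Set.ncard_image_of_injective _ (Sym2.map.injective Subtype.val_injective)]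
    rw [← Set.ncard_coe_finset, coe_edgeFinset, h2, hTq] at h1
    rw [Set.ncard_eq_toFinset_card', Set.toFinset_card, ← h1]
  -- find a, b with T.edgeSet ⊆ H.edgeSet ∪ {s(a,b)}, a ∈ T.verts
  obtain ⟨a, b, ha, hab⟩ : ∃ a b : V, a ∈ T.verts ∧
      ∀ e ∈ T.edgeSet, e ∈ H.edgeSet ∨ e = s(a, b) := by
    by_cases hB : ∀ e ∈ T.edgeSet, e ∈ H.edgeSet
    · obtain ⟨a0⟩ := hTree.isConnected.nonempty
      exact ⟨↑a0, ↑a0, a0.2, fun e he => Or.inl (hB e he)⟩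
    · push_neg at hB
      obtain ⟨e0, he0T, he0H⟩ := hB
      induction e0 using Sym2.ind with
      | _ a b =>
        refine ⟨a, b, T.mem_verts_of_mem_edge he0T (Sym2.mem_mk_left a b), ?_⟩
        intro e heT
        by_cases heH : e ∈ H.edgeSet
        · exact Or.inl heH
        · refine Or.inr (hinj heT he0T ?_)
          rw [hcm e heH, hcm _ he0H]
  -- every vertex of T is in the H-component of a or of b
  have hsub : T.verts ⊆ (H.connectedComponentMk a).supp ∪ (H.connectedComponentMk b).supp := by
    intro v hv
    obtain ⟨w⟩ := hTree.isConnected.preconnected ⟨a, ha⟩ ⟨v, hv⟩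
    have := walk_transfer H T a b hab w (Or.inl (Reachable.refl a))
    rcases this with h | h
    · exact Or.inl (by simpa [ConnectedComponent.mem_supp_iff, ConnectedComponent.eq]
        using h.symm)
    · exact Or.inr (by simpa [ConnectedComponent.mem_supp_iff, ConnectedComponent.eq]
        using h.symm)
  set Ca := H.connectedComponentMk a with hCa
  set Cb := H.connectedComponentMk b with hCb
  have hle : q + 1 ≤ Ca.supp.ncard + Cb.supp.ncard := by
    calc q + 1 = T.verts.ncard := hcard.symm
    _ ≤ (Ca.supp ∪ Cb.supp).ncard := Set.ncard_le_ncard hsub (Set.toFinite _)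
    _ ≤ Ca.supp.ncard + Cb.supp.ncard := Set.ncard_union_le _ _
  by_cases hCab : Ca = Cb
  · -- single component contains all q+1 vertices; get second component
    have hq1 : q + 1 ≤ Ca.supp.ncard := by
      have : T.verts ⊆ Ca.supp := by rw [hCab] at hsub ⊢; simpa [Set.union_self, ← hCab] using hsub
      calc q + 1 = T.verts.ncard := hcard.symm
      _ ≤ Ca.supp.ncard := Set.ncard_le_ncard this (Set.toFinite _)
    haveI : Nonempty V := ⟨a⟩
    have hnc : ¬ H.Preconnected := by
      intro hp
      exact hH.2.1 ⟨hp⟩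
    rw [Preconnected] at hnc
    push_neg at hnc
    obtain ⟨u, v, huv⟩ := hnc
    have hmkne : H.connectedComponentMk u ≠ H.connectedComponentMk v := by
      intro h; exact huv (ConnectedComponent.eq.mp h)
    obtain ⟨D, hD, w0, hw0⟩ : ∃ D : H.ConnectedComponent, D ≠ Ca ∧ ∃ w0, w0 ∈ D.supp := by
      by_cases h : H.connectedComponentMk u = Ca
      · exact ⟨H.connectedComponentMk v, fun hh => hmkne (h.trans hh.symm), v, rfl⟩
      · exact ⟨H.connectedComponentMk u, h, u, rfl⟩
    have hD1 : 1 ≤ D.supp.ncard := by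
      rw [Nat.one_le_iff_ne_zero]
      intro h0
      rw [Set.ncard_eq_zero (Set.toFinite _)] at h0
      exact absurd (h0 ▸ hw0) (Set.notMem_empty w0)
    have := hH.2.2 D Ca hD
    omega
  · have := hH.2.2 Ca Cb hCab
    omega

/-- For a connected graph `G` of order `n ≥ 3` and `2 ≤ q ≤ n−1`,
`ar(G, 𝒯_q) ≥ ℓ_q(G) + 1`. -/
theorem stmt1 (G : SimpleGraph V) (n : ℕ) (hn : Fintype.card V = n) (h3 : 3 ≤ n)
    (hG : G.Connected) (q : ℕ) (hq2 : 2 ≤ q) (hq : q ≤ n - 1) :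
    ell G q + 1 ≤ ar G q := by
  classical
  haveI : Nontrivial V := by
    rw [← Fintype.one_lt_card_iff_nontrivial]; omega
  -- the set defining ell
  set S : Set ℕ := {m | ∃ H : SimpleGraph V, inS G H q ∧ H.edgeSet.ncard = m} with hS
  have hbotS : (0 : ℕ) ∈ S := by
    refine ⟨⊥, ⟨bot_le, ?_, ?_⟩, by simp⟩
    · intro hc
      exact not_preconnected_bot hc.preconnected
    · intro C D hCD
      have hsupp : ∀ E : (⊥ : SimpleGraph V).ConnectedComponent, E.supp.ncard = 1 := by
        intro E
        induction E using ConnectedComponent.ind with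
        | _ v =>
          have : (ConnectedComponent.supp ((⊥ : SimpleGraph V).connectedComponentMk v)) = {v} := by
            ext w
            simp [ConnectedComponent.mem_supp_iff, ConnectedComponent.eq, reachable_bot]
          rw [this, Set.ncard_singleton]
      rw [hsupp C, hsupp D]; omega
  have hSbdd : BddAbove S := by
    refine ⟨G.edgeSet.ncard, ?_⟩
    rintro m ⟨H, hH, rfl⟩
    exact Set.ncard_le_ncard (edgeSet_mono hH.1) (Set.toFinite _)
  have hmem : ell G q ∈ S := Nat.sSup_mem ⟨0, hbotS⟩ hSbdd
  obtain ⟨H, hH, hm⟩ := hmem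
  set m := ell G q with hmdef
  -- build the coloring
  haveI : Fintype ↥H.edgeSet := (Set.toFinite _).fintype
  have hcardH : Fintype.card ↥H.edgeSet = m := by
    rw [← Set.toFinset_card, ← Set.ncard_eq_toFinset_card', hm]
  let f : ↥H.edgeSet ≃ Fin m := Fintype.equivFinOfCardEq hcardH
  let c : Sym2 V → ℕ := fun e => if h : e ∈ H.edgeSet then (f ⟨e, h⟩ : ℕ) else m
  have hcH : ∀ e (h : e ∈ H.edgeSet), c e = f ⟨e, h⟩ := by
    intro e h; simp only [c, dif_pos h]
  have hcm : ∀ e, e ∉ H.edgeSet → c e = m := by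
    intro e h; simp only [c, dif_neg h]
  -- an edge of G not in H
  have hne : ∃ e0 ∈ G.edgeSet, e0 ∉ H.edgeSet := by
    by_contra hcon
    push_neg at hcon
    have : G = H := edgeSet_injective (Set.Subset.antisymm hcon (edgeSet_mono hH.1)).symm ▸ rfl
    have hGH : G.edgeSet = H.edgeSet := Set.Subset.antisymm hcon (edgeSet_mono hH.1)
    exact hH.2.1 (edgeSet_inj.mp hGH ▸ hG)
  obtain ⟨e0, he0G, he0H⟩ := hne
  -- surjectivity
  have himg : c '' G.edgeSet = Set.Iio (m + 1) := by
    ext k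
    constructor
    · rintro ⟨e, heG, rfl⟩
      by_cases h : e ∈ H.edgeSet
      · rw [hcH e h]; exact lt_of_lt_of_le (f ⟨e, h⟩).2 (Nat.le_succ m)
      · rw [hcm e h]; exact Nat.lt_succ_self m
    · intro hk
      rcases Nat.lt_succ_iff_lt_or_eq.mp hk with hk | rfl
      · refine ⟨(f.symm ⟨k, hk⟩ : Sym2 V), edgeSet_mono hH.1 (f.symm ⟨k, hk⟩).2, ?_⟩
        rw [hcH _ (f.symm ⟨k, hk⟩).2]
        simp
      · exact ⟨e0, he0G, hcm e0 he0H⟩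
  -- bounded above
  have harSbdd : BddAbove {t | ∃ c : Sym2 V → ℕ, c '' G.edgeSet = Set.Iio t ∧
      ¬ hasRainbowTree G c q} := by
    refine ⟨G.edgeSet.ncard, ?_⟩
    rintro t ⟨c', hc', -⟩
    have : (Set.Iio t).ncard ≤ G.edgeSet.ncard := by
      rw [← hc']; exact Set.ncard_image_le (Set.toFinite _)
    rwa [← Finset.coe_Iio, Set.ncard_coe_finset, Nat.card_Iio] at this
  exact le_csSup harSbdd ⟨c, himg, no_rainbow hH hq2 hm c
    (fun e₁ h₁ e₂ h₂ hc => by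
      rw [hcH e₁ h₁, hcH e₂ h₂] at hc
      exact congrArg Subtype.val (f.injective (Fin.val_injective (by exact_mod_cast hc))))
    (fun e h => by rw [hcH e h]; exact (f ⟨e, h⟩).2)
    hcm⟩
end

section
/- Let G be a connected graph, c a surjective t-edge-coloring of G, and H a rainbow spanning subgraph of G with exactly t edges (a representing graph) such that some component H₁ of H has order at least the maximum component order of every representing graph of c. If H has at least two components, then H₁ contains a bridge b whose color equals the color of some edge of G joining H₁ to another component of H. -/
open SimpleGraph

private lemma reach_del {V : Type} {H : SimpleGraph V} {u v : V}
    (h : (H.deleteEdges {s(u, v)}).Reachable u v) {a b : V}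
    (hab : H.Reachable a b) : (H.deleteEdges {s(u, v)}).Reachable a b := by
  obtain ⟨p⟩ := hab
  induction p with
  | nil => exact Reachable.refl _
  | @cons x y z h' p ih =>
    refine Reachable.trans ?_ ih
    by_cases he : s(x, y) = s(u, v)
    · rw [Sym2.eq_iff] at he
      rcases he with ⟨rfl, rfl⟩ | ⟨rfl, rfl⟩
      · exact h
      · exact h.symm
    · exact (deleteEdges_adj.mpr ⟨h', by simpa using he⟩).reachable

/-- Let `c` be a surjective `t`-edge-coloring of a connected graph `G`, and let `H` be a
representing graph of `c` (a rainbow spanning subgraph with exactly `t` edges) having a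
component `H₁` whose order is at least the maximum component order of every representing
graph of `c`.  If `H` is disconnected, then `H₁` contains a bridge `b` whose color equals
the color of some edge of `G` joining `H₁` to another component of `H`. -/
theorem stmt2 {V : Type} [Fintype V] (G : SimpleGraph V) (hG : G.Connected)
    (t : ℕ) (c : Sym2 V → ℕ) (hc : c '' G.edgeSet = Set.Iio t)
    (H : SimpleGraph V) (hHG : H ≤ G)
    (hrainbow : Set.InjOn c H.edgeSet) (hcard : H.edgeSet.ncard = t)
    (H₁ : H.ConnectedComponent)
    (hmax : ∀ H' : SimpleGraph V, H' ≤ G → Set.InjOn c H'.edgeSet →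
      H'.edgeSet.ncard = t →
      ∀ C : H'.ConnectedComponent, C.supp.ncard ≤ H₁.supp.ncard)
    (hdisc : ¬ H.Connected) :
    ∃ u v : V, H.Adj u v ∧ u ∈ H₁.supp ∧ v ∈ H₁.supp ∧ H.IsBridge s(u, v) ∧
      ∃ x y : V, G.Adj x y ∧ x ∈ H₁.supp ∧ y ∉ H₁.supp ∧ c s(x, y) = c s(u, v) := by
  classical
  have hne : Nonempty V := hG.nonempty
  obtain ⟨x₀, hx₀⟩ := H₁.exists_rep
  have hx₀m : x₀ ∈ H₁.supp := by rw [ConnectedComponent.mem_supp_iff]; exact hx₀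
  -- there is a vertex outside H₁
  obtain ⟨z, hz⟩ : ∃ z, z ∉ H₁.supp := by
    by_contra h
    push_neg at h
    refine hdisc ⟨fun a b => ?_⟩
    have ha := (ConnectedComponent.mem_supp_iff _ _).mp (h a)
    have hb := (ConnectedComponent.mem_supp_iff _ _).mp (h b)
    exact ConnectedComponent.exact (ha.trans hb.symm)
  -- a boundary edge of G
  obtain ⟨p⟩ := hG.preconnected x₀ z
  obtain ⟨d, -, hdx, hdy⟩ := p.exists_boundary_dart H₁.supp hx₀m hz
  set x := d.fst with hxdef
  set y := d.snd with hydef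
  have hxy : G.Adj x y := d.adj
  -- s(x,y) is not an edge of H
  have hxyH : s(x, y) ∉ H.edgeSet := by
    intro h
    apply hdy
    rw [ConnectedComponent.mem_supp_iff, ← ConnectedComponent.sound (H.mem_edgeSet.mp h).reachable]
    exact (ConnectedComponent.mem_supp_iff _ _).mp hdx
  -- c maps H.edgeSet onto Iio t
  have himg : c '' H.edgeSet = Set.Iio t := by
    apply Set.eq_of_subset_of_ncard_le
    · rw [← hc]
      exact Set.image_mono (edgeSet_mono hHG)
    · rw [Set.ncard_image_of_injOn hrainbow, hcard]
      have : (Set.Iio t) = ↑(Finset.Iio t) := by simp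
      rw [this, Set.ncard_coe_finset, Nat.card_Iio]
    · exact Set.finite_Iio t
  -- the edge of H with the same color as s(x,y)
  have hαt : c s(x, y) ∈ Set.Iio t := by
    rw [← hc]; exact ⟨s(x, y), G.mem_edgeSet.mpr hxy, rfl⟩
  obtain ⟨e₀, he₀, hce₀⟩ : ∃ e ∈ H.edgeSet, c e = c s(x, y) := by
    rw [← himg] at hαt; exact hαt
  revert he₀ hce₀
  induction e₀ using Sym2.ind with
  | _ u v =>
  intro he₀ hce₀
  have huv : H.Adj u v := H.mem_edgeSet.mp he₀
  by_cases hbr : H.IsBridge s(u, v) ∧ u ∈ H₁.supp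
  · -- done
    have hvm : v ∈ H₁.supp := by
      rw [ConnectedComponent.mem_supp_iff, ← ConnectedComponent.sound huv.reachable]
      exact (ConnectedComponent.mem_supp_iff _ _).mp hbr.2
    exact ⟨u, v, huv, hbr.2, hvm, hbr.1, x, y, hxy, hdx, hdy, hce₀.symm⟩
  · -- otherwise we build a better representing graph, contradiction
    exfalso
    set K := H.deleteEdges {s(u, v)} with hKdef
    have hKreach : ∀ w ∈ H₁.supp, K.Reachable x w := by
      intro w hw
      have hxw : H.Reachable x w := by
        apply ConnectedComponent.exact
        rw [(ConnectedComponent.mem_supp_iff _ _).mp hdx,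
          (ConnectedComponent.mem_supp_iff _ _).mp hw]
      by_cases hu : u ∈ H₁.supp
      · have hnb : ¬ H.IsBridge s(u, v) := fun h => hbr ⟨h, hu⟩
        rw [isBridge_iff] at hnb
        push_neg at hnb
        exact reach_del hnb hxw
      · obtain ⟨q⟩ := hxw
        refine ⟨q.toDeleteEdges _ ?_⟩
        intro e heq he
        rw [Set.mem_singleton_iff] at he
        subst he
        apply hu
        have hus : u ∈ q.support := q.fst_mem_support_of_mem_edges heq
        have : H.Reachable x u := ⟨q.takeUntil u hus⟩
        rw [ConnectedComponent.mem_supp_iff, ← ConnectedComponent.sound this]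
        exact (ConnectedComponent.mem_supp_iff _ _).mp hdx
    set H' : SimpleGraph V := K ⊔ fromEdgeSet {s(x, y)} with hH'def
    have hH'G : H' ≤ G := by
      refine sup_le ((deleteEdges_le _).trans hHG) ?_
      intro a b hab
      rw [fromEdgeSet_adj, Set.mem_singleton_iff] at hab
      exact G.mem_edgeSet.mp (hab.1 ▸ G.mem_edgeSet.mpr hxy)
    have hedge : H'.edgeSet = insert s(x, y) (H.edgeSet \ {s(u, v)}) := by
      rw [hH'def, edgeSet_sup, hKdef, edgeSet_deleteEdges, edgeSet_fromEdgeSet]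
      have : ({s(x, y)} : Set (Sym2 V)) \ {e | e.IsDiag} = {s(x, y)} := by
        ext e
        simp only [Set.mem_diff, Set.mem_singleton_iff, Set.mem_setOf_eq]
        refine ⟨fun h => h.1, fun h => ⟨h, ?_⟩⟩
        subst h
        simpa using hxy.ne
      rw [Sym2.diagSet_eq_setOfPred_isDiag, this, Set.union_comm, Set.insert_eq]
    have hnm : s(x, y) ∉ H.edgeSet \ {s(u, v)} := fun h => hxyH h.1
    have htpos : 0 < t := lt_of_le_of_lt (Nat.zero_le _) hαt
    have hcard' : H'.edgeSet.ncard = t := by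
      rw [hedge, Set.ncard_insert_of_notMem hnm (Set.toFinite _),
        Set.ncard_diff_singleton_of_mem he₀, hcard]
      omega
    have hinj' : Set.InjOn c H'.edgeSet := by
      rw [hedge, Set.injOn_insert hnm]
      refine ⟨hrainbow.mono Set.diff_subset, ?_⟩
      rintro ⟨f, hf, hfc⟩
      exact hf.2 (hrainbow hf.1 he₀ (hfc.trans hce₀.symm))
    set C' := H'.connectedComponentMk x with hC'def
    have hsub : insert y H₁.supp ⊆ C'.supp := by
      intro w hw'
      rcases Set.mem_insert_iff.mp hw' with heq | hw
      · rw [heq, ConnectedComponent.mem_supp_iff]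
        refine ConnectedComponent.sound ?_
        have hadj : H'.Adj x y := Or.inr ((fromEdgeSet_adj _).mpr ⟨rfl, hxy.ne⟩)
        exact hadj.reachable.symm
      · rw [ConnectedComponent.mem_supp_iff]
        exact ConnectedComponent.sound ((hKreach w hw).mono le_sup_left).symm
    have h1 : H₁.supp.ncard + 1 ≤ C'.supp.ncard := by
      have := Set.ncard_le_ncard hsub (Set.toFinite _)
      rwa [Set.ncard_insert_of_notMem hdy (Set.toFinite _)] at this
    have h2 := hmax H' hH'G hinj' hcard' C'
    omega
end

section
/- For any graph Q with components Q₁, …, Q_s and chromatic number χ(Q) = t, there exists a vertex u_i in each component Q_i such that the sum of the degrees d_Q(u₁) + ⋯ + d_Q(u_s) is at most (t−1)/t · |V(Q)|. -/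
open SimpleGraph Finset

private lemma stmt6_key {V : Type} [Fintype V] (Q : SimpleGraph V) {t : ℕ}
    (c : Q.Coloring (Fin t)) (C : Q.ConnectedComponent) :
    ∃ u ∈ C.supp, t * (Q.neighborSet u).ncard ≤ (t - 1) * C.supp.ncard := by
  classical
  obtain ⟨v, rfl⟩ := C.exists_rep
  have ht : 0 < t := Fin.pos (c v)
  show ∃ u ∈ (Q.connectedComponentMk v).supp,
      t * (Q.neighborSet u).ncard ≤ (t - 1) * (Q.connectedComponentMk v).supp.ncard
  set C := Q.connectedComponentMk v with hC
  set F : Finset V := C.supp.toFinset with hF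
  -- fiberwise card decomposition
  have hcard : F.card = ∑ i : Fin t, (F.filter (fun w => c w = i)).card := by
    exact Finset.card_eq_sum_card_fiberwise (fun w _ => Finset.mem_univ (c w))
  -- choose color class of max size
  obtain ⟨i, -, hi⟩ := Finset.exists_max_image (Finset.univ : Finset (Fin t))
    (fun i => (F.filter (fun w => c w = i)).card) ⟨c v, Finset.mem_univ _⟩
  have hmax : F.card ≤ t * (F.filter (fun w => c w = i)).card := by
    calc F.card = ∑ j : Fin t, (F.filter (fun w => c w = j)).card := hcard
    _ ≤ ∑ _j : Fin t, (F.filter (fun w => c w = i)).card :=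
        Finset.sum_le_sum (fun j _ => hi j (Finset.mem_univ j))
    _ = t * (F.filter (fun w => c w = i)).card := by
        simp [Finset.sum_const, mul_comm]
  have hvF : v ∈ F := by
    simp [hF, Set.mem_toFinset, hC]
  have hFpos : 0 < F.card := Finset.card_pos.2 ⟨v, hvF⟩
  have hfilpos : 0 < (F.filter (fun w => c w = i)).card := by
    rcases Nat.eq_zero_or_pos (F.filter (fun w => c w = i)).card with h0 | h0
    · rw [h0, Nat.mul_zero] at hmax; omega
    · exact h0
  obtain ⟨u, hu⟩ := Finset.card_pos.1 hfilpos
  rw [Finset.mem_filter] at hu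
  have huC : u ∈ C.supp := by
    have := hu.1; rwa [hF, Set.mem_toFinset] at this
  refine ⟨u, huC, ?_⟩
  -- neighbors of u avoid the color class of u and lie in F
  have hsub : Q.neighborFinset u ⊆ F \ (F.filter (fun w => c w = i)) := by
    intro w hw
    rw [Q.mem_neighborFinset] at hw
    have hwF : w ∈ F := by
      rw [hF, Set.mem_toFinset, ConnectedComponent.mem_supp_iff]
      rw [ConnectedComponent.mem_supp_iff] at huC
      rw [← huC]
      exact (SimpleGraph.ConnectedComponent.connectedComponentMk_eq_of_adj hw).symm
    rw [Finset.mem_sdiff, Finset.mem_filter]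
    refine ⟨hwF, fun h => ?_⟩
    exact c.valid hw.symm (h.2.trans hu.2.symm)
  have hdeg : (Q.neighborSet u).ncard ≤ F.card - (F.filter (fun w => c w = i)).card := by
    have : (Q.neighborSet u).ncard = (Q.neighborFinset u).card := by
      rw [SimpleGraph.neighborFinset, Set.ncard_eq_toFinset_card']
    rw [this, ← Finset.card_sdiff_of_subset (Finset.filter_subset _ _)]
    exact Finset.card_le_card hsub
  have hsuppcard : C.supp.ncard = F.card := by
    rw [hF, Set.ncard_eq_toFinset_card']
  rw [hsuppcard]
  calc t * (Q.neighborSet u).ncard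
      ≤ t * (F.card - (F.filter (fun w => c w = i)).card) :=
        Nat.mul_le_mul_left t hdeg
    _ = t * F.card - t * (F.filter (fun w => c w = i)).card := by
        exact Nat.mul_sub t _ _
    _ ≤ t * F.card - F.card := Nat.sub_le_sub_left hmax _
    _ = (t - 1) * F.card := by
        rw [Nat.sub_mul, one_mul]

/-- For any graph `Q` with chromatic number `t`, one can choose a vertex `u_C` in each
connected component `C` of `Q` such that `∑ d_Q(u_C) ≤ (t−1)/t · |V(Q)|`. -/
theorem stmt6 {V : Type} [Fintype V] (Q : SimpleGraph V) (t : ℕ)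
    (ht : Q.chromaticNumber = (t : ℕ∞)) :
    ∃ f : Q.ConnectedComponent → V, (∀ C, f C ∈ C.supp) ∧
      (∑ᶠ C : Q.ConnectedComponent, ((Q.neighborSet (f C)).ncard : ℝ)) ≤
        (((t : ℝ) - 1) / t) * Fintype.card V := by
  classical
  have hcol : Q.Colorable t := by
    rw [← SimpleGraph.chromaticNumber_le_iff_colorable, ht]
  obtain ⟨c⟩ := hcol
  choose f hf1 hf2 using fun C => stmt6_key Q c C
  refine ⟨f, hf1, ?_⟩
  cases isEmpty_or_nonempty V with
  | inl h =>
    have : IsEmpty Q.ConnectedComponent := by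
      constructor; intro C
      obtain ⟨v, -⟩ := C.exists_rep
      exact h.elim v
    simp [finsum_of_isEmpty, Fintype.card_eq_zero]
  | inr h =>
    have htpos : 0 < t := Fin.pos (c h.some)
    have htR : (0:ℝ) < t := by exact_mod_cast htpos
    haveI : Fintype Q.ConnectedComponent := Fintype.ofFinite _
    rw [finsum_eq_sum_of_fintype]
    have step : ∀ C : Q.ConnectedComponent,
        ((Q.neighborSet (f C)).ncard : ℝ) ≤ ((t:ℝ) - 1) / t * C.supp.ncard := by
      intro C
      rw [div_mul_eq_mul_div, le_div_iff₀ htR]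
      have := hf2 C
      have hcast : ((t * (Q.neighborSet (f C)).ncard : ℕ) : ℝ)
          ≤ (((t - 1) * C.supp.ncard : ℕ) : ℝ) := by exact_mod_cast this
      push_cast [Nat.cast_sub htpos] at hcast
      linarith [hcast]
    calc ∑ C : Q.ConnectedComponent, ((Q.neighborSet (f C)).ncard : ℝ)
        ≤ ∑ C : Q.ConnectedComponent, ((t:ℝ) - 1) / t * C.supp.ncard :=
          Finset.sum_le_sum (fun C _ => step C)
      _ = ((t:ℝ) - 1) / t * ∑ C : Q.ConnectedComponent, (C.supp.ncard : ℝ) := by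
          rw [Finset.mul_sum]
      _ = ((t:ℝ) - 1) / t * Fintype.card V := by
          congr 1
          have : ∑ C : Q.ConnectedComponent, (C.supp.ncard : ℝ)
              = ((∑ C : Q.ConnectedComponent, C.supp.ncard : ℕ) : ℝ) := by push_cast; ring
          rw [this]
          norm_cast
          have : ∀ C : Q.ConnectedComponent, C.supp.ncard
              = (Finset.univ.filter
                  (fun v => Q.connectedComponentMk v = C)).card := by
            intro C
            rw [Set.ncard_eq_toFinset_card']
            congr 1
            ext v
            simp [ConnectedComponent.mem_supp_iff]
          simp_rw [this]
          have hkey : (Finset.univ : Finset V).card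
              = ∑ C : Q.ConnectedComponent,
                (Finset.univ.filter (fun v => Q.connectedComponentMk v = C)).card :=
            Finset.card_eq_sum_card_fiberwise (fun v _ => Finset.mem_univ _)
          rw [← hkey, Finset.card_univ]
end

section
/- Let G be a complete multi-partite graph of order n with at least two partite sets, let 2 ≤ q ≤ n−1, and let H be a maximum-size member of S_q(G) whose largest component order is maximum among all maximum-size members. Then or₁(H) + or₃(H) = q, where or_i(H) denotes the i-th largest component order of H. -/
open SimpleGraph

variable {V : Type} [Fintype V]

/-- `G` is a complete multi-partite graph: non-adjacency is transitive. -/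
def IsCompMultipartite (G : SimpleGraph V) : Prop :=
  ∀ u v w : V, ¬ G.Adj u v → ¬ G.Adj v w → ¬ G.Adj u w

/-- The list of orders of the components of `H`, in decreasing order. -/
noncomputable def orList (H : SimpleGraph V) : List ℕ :=
  letI : Fintype H.ConnectedComponent := Fintype.ofFinite _
  (((Finset.univ : Finset H.ConnectedComponent).val.map
      fun C => C.supp.ncard).sort (· ≤ ·)).reverse

/-- `or_i(H)`: the `i`-th largest component order of `H` (`i ≥ 1`). -/
noncomputable def orI (H : SimpleGraph V) (i : ℕ) : ℕ :=
  (orList H).getD (i - 1) 0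

set_option linter.unusedSectionVars false

section Aux

lemma reach_inv {H : SimpleGraph V} {r : V → V → Prop}
    (hadj : ∀ x y, H.Adj x y → r x y) (htrans : Transitive r) {x y : V}
    (h : H.Reachable x y) : x = y ∨ r x y := by
  obtain ⟨w⟩ := h
  induction w with
  | nil => exact Or.inl rfl
  | cons h p ih =>
    rcases ih with rfl | hr
    · exact Or.inr (hadj _ _ h)
    · exact Or.inr (htrans (hadj _ _ h) hr)

lemma le_ell {G H' : SimpleGraph V} {q : ℕ} (h : inS G H' q) :
    H'.edgeSet.ncard ≤ ell G q := by
  apply le_csSup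
  · refine ⟨Nat.card (Sym2 V), ?_⟩
    rintro m ⟨K, _, rfl⟩
    calc K.edgeSet.ncard ≤ (Set.univ : Set (Sym2 V)).ncard :=
          Set.ncard_le_ncard (Set.subset_univ _) (Set.toFinite _)
      _ = Nat.card (Sym2 V) := Set.ncard_univ _
  · exact ⟨H', h, rfl⟩


lemma exists_list_of_map_mset {α β : Type} (f : α → β) :
    ∀ (l : List β) (s : Multiset α), s.map f = ↑l →
      ∃ cs : List α, (↑cs : Multiset α) = s ∧ cs.map f = l := by
  classical
  intro l
  induction l with
  | nil =>
    intro s h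
    refine ⟨[], ?_, rfl⟩
    simpa [eq_comm] using (Multiset.map_eq_zero (f := f) (s := s)).mp (by simpa using h)
  | cons b l ih =>
    intro s h
    rw [show ((b :: l : List β) : Multiset β) = b ::ₘ (l : Multiset β) from rfl] at h
    obtain ⟨a, ha, hfa, herase⟩ := (Multiset.map_eq_cons f s (l : Multiset β) b).mpr h
    obtain ⟨cs, hcs, hmap⟩ := ih (s.erase a) herase
    refine ⟨a :: cs, ?_, by simp [hmap, hfa]⟩
    rw [show ((a :: cs : List α) : Multiset α) = a ::ₘ (cs : Multiset α) from rfl, hcs,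
      Multiset.cons_erase ha]

lemma orList_sorted (H : SimpleGraph V) : (orList H).Pairwise (· ≥ ·) := by
  classical
  rw [orList, List.pairwise_reverse]
  exact Multiset.pairwise_sort ..

lemma orList_exists (H : SimpleGraph V) :
    ∃ cs : List H.ConnectedComponent, cs.Nodup ∧ (∀ C, C ∈ cs) ∧
      cs.map (fun C => C.supp.ncard) = orList H := by
  classical
  letI : Fintype H.ConnectedComponent := Fintype.ofFinite _
  have hmset : ((Finset.univ : Finset H.ConnectedComponent).val.map
      fun C => C.supp.ncard) = ((orList H : List ℕ) : Multiset ℕ) := by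
    rw [orList, Multiset.coe_reverse, Multiset.sort_eq]
  obtain ⟨cs, hcs, hmap⟩ := exists_list_of_map_mset _ (orList H) _ hmset
  refine ⟨cs, ?_, ?_, hmap⟩
  · have := hcs ▸ (Finset.univ.nodup)
    exact Multiset.coe_nodup.mp this
  · intro C
    have : C ∈ ((cs : Multiset _)) := by rw [hcs]; exact Finset.mem_univ_val _
    exact this

lemma orList_getD_anti (H : SimpleGraph V) {i j : ℕ} (hij : i ≤ j) :
    (orList H).getD j 0 ≤ (orList H).getD i 0 := by
  rcases le_or_gt (orList H).length j with hj | hj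
  · rw [List.getD_eq_default _ _ hj]; exact Nat.zero_le _
  · have hi : i < (orList H).length := lt_of_le_of_lt hij hj
    rw [List.getD_eq_getElem _ _ hj, List.getD_eq_getElem _ _ hi]
    rcases eq_or_lt_of_le hij with rfl | hlt
    · exact le_refl _
    · exact (orList_sorted H).rel_get_of_lt (by simpa using hlt)

/-- every member of orList is a component order -/
lemma orList_mem {H : SimpleGraph V} {a : ℕ} (ha : a ∈ orList H) :
    ∃ C : H.ConnectedComponent, C.supp.ncard = a := by
  obtain ⟨cs, _, _, hmap⟩ := orList_exists H
  rw [← hmap] at ha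
  obtain ⟨C, _, hC⟩ := List.mem_map.mp ha
  exact ⟨C, hC⟩

lemma comp_le_or1 (H : SimpleGraph V) (C : H.ConnectedComponent) :
    C.supp.ncard ≤ orI H 1 := by
  obtain ⟨cs, hnd, hmem, hmap⟩ := orList_exists H
  obtain ⟨n, hn⟩ := List.mem_iff_get.mp (hmem C)
  have hlen : (n : ℕ) < (cs.map fun C => C.supp.ncard).length := by
    simpa using n.2
  have h1 : (cs.map fun C => C.supp.ncard).getD (n : ℕ) 0 = C.supp.ncard := by
    rw [List.getD_eq_getElem _ _ hlen, List.getElem_map]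
    rw [show cs[(n : ℕ)] = C from hn ▸ (List.get_eq_getElem (l := cs) (i := n)).symm]
  have h1' : (orList H).getD (n : ℕ) 0 = C.supp.ncard := by rw [← hmap]; exact h1
  have h2 := orList_getD_anti H (Nat.zero_le (n : ℕ))
  rw [h1'] at h2
  exact h2

lemma supp_nonempty {H : SimpleGraph V} (C : H.ConnectedComponent) : C.supp.Nonempty :=
  C.exists_rep.elim fun v hv => ⟨v, by rw [ConnectedComponent.mem_supp_iff]; exact hv⟩

lemma ncard_supp_pos {H : SimpleGraph V} (C : H.ConnectedComponent) : 0 < C.supp.ncard :=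
  (Set.ncard_pos (Set.toFinite _)).mpr (supp_nonempty C)

lemma orList_length (H : SimpleGraph V) :
    (orList H).length = Nat.card H.ConnectedComponent := by
  classical
  obtain ⟨cs, hnd, hmem, hmap⟩ := orList_exists H
  have : (orList H).length = cs.length := by rw [← hmap, List.length_map]
  rw [this]
  have : cs.length = cs.toFinset.card := (List.toFinset_card_of_nodup hnd).symm
  rw [this]
  have hfin : Finite H.ConnectedComponent := Finite.of_injective
    (fun C : H.ConnectedComponent => (⟨C, hmem C⟩ : {x // x ∈ cs}))
    (fun a b h => by simpa using h)
  letI : Fintype H.ConnectedComponent := Fintype.ofFinite _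
  have : cs.toFinset = Finset.univ := Finset.eq_univ_iff_forall.mpr (by simp [hmem])
  rw [this, Nat.card_eq_fintype_card]
  rfl

/-- there are (at least) three components: extract the top two and bound the rest -/
lemma three_comps (H : SimpleGraph V) (h3 : 3 ≤ (orList H).length) :
    ∃ C1 C2 : H.ConnectedComponent, C1 ≠ C2 ∧ C1.supp.ncard = orI H 1 ∧
      C2.supp.ncard = orI H 2 ∧
      ∀ C : H.ConnectedComponent, C ≠ C1 → C ≠ C2 → C.supp.ncard ≤ orI H 3 := by
  obtain ⟨cs, hnd, hmem, hmap⟩ := orList_exists H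
  have hlen : cs.length = (orList H).length := by rw [← hmap, List.length_map]
  have h0 : 0 < cs.length := by omega
  have h1 : 1 < cs.length := by omega
  have hgget : ∀ i (hi : i < cs.length),
      (cs.get ⟨i, hi⟩).supp.ncard = (orList H).getD i 0 := by
    intro i hi
    have : (orList H).getD i 0 = (cs.map fun C => C.supp.ncard).getD i 0 := by rw [hmap]
    rw [this, List.getD_eq_getElem _ _ (by simpa using hi), List.getElem_map]
    rfl
  refine ⟨cs.get ⟨0, h0⟩, cs.get ⟨1, h1⟩, ?_, ?_, ?_, ?_⟩
  · intro h
    have := (List.Nodup.get_inj_iff hnd).mp h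
    simp at this
  · exact hgget 0 h0
  · exact hgget 1 h1
  · intro C hC0 hC1
    obtain ⟨m, hm⟩ := List.mem_iff_get.mp (hmem C)
    have hm2 : 2 ≤ (m : ℕ) := by
      rcases Nat.lt_or_ge (m : ℕ) 2 with h | h
      · interval_cases h' : (m : ℕ)
        · exact absurd (by rw [← hm]; congr; exact Fin.ext h') hC0
        · exact absurd (by rw [← hm]; congr; exact Fin.ext h') hC1
      · exact h
    have := orList_getD_anti H (i := 2) (j := (m : ℕ)) hm2
    have hme : C.supp.ncard = (orList H).getD (m : ℕ) 0 := by
      rw [← hgget (m : ℕ) m.2, show cs.get ⟨(m : ℕ), m.2⟩ = C from hm]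
    rw [hme]
    exact this

lemma orI_pos (H : SimpleGraph V) {i : ℕ} (hi : i - 1 < (orList H).length) :
    0 < orI H i := by
  rw [orI, List.getD_eq_getElem _ _ hi]
  have : (orList H)[i-1] ∈ orList H := List.getElem_mem _
  obtain ⟨C, hC⟩ := orList_mem this
  rw [← hC]
  exact ncard_supp_pos C

/-- A maximum-size member of `S_q(G)` is the disjoint union of induced subgraphs:
its adjacency is `G`-adjacency within a component. -/
lemma adj_iff_of_max {G H : SimpleGraph V} {q : ℕ} (hH : inS G H q)
    (hmax : H.edgeSet.ncard = ell G q) (x y : V) :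
    H.Adj x y ↔ G.Adj x y ∧ H.Reachable x y := by
  classical
  let Hp : SimpleGraph V :=
    { Adj := fun a b => G.Adj a b ∧ H.Reachable a b
      symm := ⟨fun a b h => ⟨h.1.symm, h.2.symm⟩⟩
      loopless := ⟨fun a h => G.loopless.irrefl a h.1⟩ }
  have hple : Hp ≤ G := fun a b h => h.1
  have hle : H ≤ Hp := fun a b h => ⟨hH.1 h, h.reachable⟩
  have hreach : ∀ a b, Hp.Reachable a b ↔ H.Reachable a b := by
    intro a b
    constructor
    · intro h
      rcases reach_inv (H := Hp) (r := H.Reachable) (fun _ _ h => h.2)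
          (fun _ _ _ h1 h2 => Reachable.trans h1 h2) h with rfl | h
      · exact Reachable.refl _
      · exact h
    · exact fun h => h.mono hle
  have hsupp : ∀ a : V, (Hp.connectedComponentMk a).supp = (H.connectedComponentMk a).supp := by
    intro a
    ext b
    simp only [ConnectedComponent.mem_supp_iff, ConnectedComponent.eq]
    exact hreach b a
  have hinS : inS G Hp q := by
    refine ⟨hple, ?_, ?_⟩
    · intro hc
      exact hH.2.1 ((connected_iff H).mpr ⟨fun a b => (hreach a b).mp (hc.preconnected a b), hc.nonempty⟩)
    · intro C D hne
      obtain ⟨a, ha⟩ := C.exists_rep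
      obtain ⟨b, hb⟩ := D.exists_rep
      have hne' : H.connectedComponentMk a ≠ H.connectedComponentMk b := by
        intro h
        apply hne
        rw [← ha, ← hb]
        exact ConnectedComponent.sound ((hreach a b).mpr (ConnectedComponent.exact h))
      have := hH.2.2 _ _ hne'
      rw [← ha, ← hb]
      show (Hp.connectedComponentMk a).supp.ncard + (Hp.connectedComponentMk b).supp.ncard ≤ q
      rw [hsupp a, hsupp b]
      exact this
  have hsub : H.edgeSet ⊆ Hp.edgeSet := edgeSet_mono hle
  have hcard : Hp.edgeSet.ncard ≤ H.edgeSet.ncard := hmax ▸ le_ell hinS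
  have hEeq : H.edgeSet = Hp.edgeSet :=
    Set.eq_of_subset_of_ncard_le hsub hcard (Set.toFinite _)
  have : H.Adj x y ↔ Hp.Adj x y := by
    rw [← mem_edgeSet, ← mem_edgeSet, hEeq]
  exact this

lemma coe_filter_ncard {s : Set V} (p : V → Prop) [DecidablePred p]
    [Fintype s] :
    (s.toFinset.filter p).card = {x ∈ s | p x}.ncard := by
  rw [← Set.ncard_coe_finset]
  congr 1
  ext x
  simp

/-- In a complete multipartite graph, if `|B| ≤ |A|` then some `v ∈ B` has at least as many
non-neighbours (weakly) in `B` as in `A`, after correcting by the sizes. -/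
lemma exists_good_vertex (G : SimpleGraph V) [DecidableRel G.Adj] (hG : IsCompMultipartite G)
    (A B : Finset V) (hB : B.Nonempty) (hle : B.card ≤ A.card) :
    ∃ v ∈ B, (A.filter fun w => ¬ G.Adj v w).card + B.card
        ≤ (B.filter fun w => ¬ G.Adj v w).card + A.card := by
  classical
  by_contra hcon
  push_neg at hcon
  have hbad : ∀ v ∈ B, (B.filter fun w => ¬ G.Adj v w).card + A.card + 1
      ≤ (A.filter fun w => ¬ G.Adj v w).card + B.card := fun v hv => hcon v hv
  -- the partition into parts
  let st : Setoid V := ⟨fun a b => ¬ G.Adj a b,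
    ⟨fun a => G.loopless.irrefl a, fun {a b} h => fun h2 => h h2.symm,
     fun {a b c} h1 h2 => hG a b c h1 h2⟩⟩
  let qm : V → Quotient st := fun v => Quotient.mk st v
  have hqm : ∀ v w : V, qm w = qm v ↔ ¬ G.Adj v w := by
    intro v w
    constructor
    · intro h
      have := Quotient.exact h
      exact fun h2 => this h2.symm
    · intro h
      exact Quotient.sound (fun h2 => h h2.symm)
  let T : Finset (Quotient st) := B.image qm
  have hT : T.Nonempty := hB.image qm
  have hfilter : ∀ (S : Finset V), ∀ v : V,
      (S.filter fun w => ¬ G.Adj v w) = S.filter fun w => qm w = qm v := by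
    intro S v
    apply Finset.filter_congr
    intro w _
    simp [hqm v w]
  -- sum of B-fibres is |B|
  have hsumB : ∑ c ∈ T, (B.filter fun w => qm w = c).card = B.card :=
    (Finset.card_eq_sum_card_fiberwise (fun v hv => Finset.mem_image_of_mem qm hv)).symm
  -- sum of A-fibres is at most |A|
  have hsumA : ∑ c ∈ T, (A.filter fun w => qm w = c).card ≤ A.card := by
    have h1 : ∀ c ∈ T, (A.filter fun w => qm w = c)
        = (A.filter fun w => qm w ∈ T).filter fun w => qm w = c := by
      intro c hc
      rw [Finset.filter_filter]
      apply Finset.filter_congr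
      intro w _
      constructor
      · intro h; exact ⟨h ▸ hc, h⟩
      · intro h; exact h.2
    calc ∑ c ∈ T, (A.filter fun w => qm w = c).card
        = ∑ c ∈ T, ((A.filter fun w => qm w ∈ T).filter fun w => qm w = c).card :=
          Finset.sum_congr rfl (fun c hc => by rw [h1 c hc])
      _ = (A.filter fun w => qm w ∈ T).card :=
          (Finset.card_eq_sum_card_fiberwise (fun v hv => (Finset.mem_filter.mp hv).2)).symm
      _ ≤ A.card := Finset.card_filter_le _ _
  -- per-class bad inequality
  have hbad' : ∀ c ∈ T, (B.filter fun w => qm w = c).card + A.card + 1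
      ≤ (A.filter fun w => qm w = c).card + B.card := by
    intro c hc
    obtain ⟨v, hv, rfl⟩ := Finset.mem_image.mp hc
    have := hbad v hv
    rwa [hfilter B v, hfilter A v] at this
  have hsum := Finset.sum_le_sum hbad'
  simp only [Finset.sum_add_distrib, Finset.sum_const, smul_eq_mul, mul_one] at hsum
  have hk : 1 ≤ T.card := Finset.card_pos.mpr hT
  obtain ⟨k, hkk⟩ : ∃ k, T.card = k + 1 := ⟨T.card - 1, by omega⟩
  rw [hsumB, hkk, Nat.succ_mul, Nat.succ_mul] at hsum
  have hmul : k * B.card ≤ k * A.card := Nat.mul_le_mul_left k hle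
  linarith [hsumA, hmul, hsum]

lemma incident_ncard (K : SimpleGraph V) (v : V) :
    {e ∈ K.edgeSet | v ∈ e}.ncard = (K.neighborSet v).ncard := by
  have himg : {e ∈ K.edgeSet | v ∈ e} = (fun w => s(v, w)) '' K.neighborSet v := by
    ext e
    induction e with
    | _ a b =>
      simp only [Set.mem_setOf_eq, Set.mem_image, mem_edgeSet, mem_neighborSet, Sym2.mem_iff]
      constructor
      · rintro ⟨hadj, rfl | rfl⟩
        · exact ⟨b, hadj, rfl⟩
        · exact ⟨a, hadj.symm, Sym2.eq_swap⟩
      · rintro ⟨x, hx, hxe⟩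
        rcases Sym2.eq_iff.mp hxe with ⟨rfl, rfl⟩ | ⟨rfl, rfl⟩
        · exact ⟨hx, Or.inl rfl⟩
        · exact ⟨hx.symm, Or.inr rfl⟩
  rw [himg]
  exact Set.ncard_image_of_injective _ (fun a b h => Sym2.congr_right.mp h)

lemma ncard_edge_split (K : SimpleGraph V) (v : V) :
    K.edgeSet.ncard = {e ∈ K.edgeSet | v ∉ e}.ncard + (K.neighborSet v).ncard := by
  rw [← incident_ncard K v]
  rw [← Set.ncard_union_eq (by
    apply Set.disjoint_left.mpr
    rintro e ⟨_, he⟩ ⟨_, he'⟩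
    exact he he') (Set.toFinite _) (Set.toFinite _)]
  congr 1
  ext e
  simp only [Set.mem_union, Set.mem_setOf_eq]
  constructor
  · intro he
    by_cases hv : v ∈ e
    · exact Or.inr ⟨he, hv⟩
    · exact Or.inl ⟨he, hv⟩
  · rintro (⟨he, _⟩ | ⟨he, _⟩) <;> exact he

lemma ell_pos (G : SimpleGraph V) (q : ℕ) (hq3 : 3 ≤ q) (hcard : 3 ≤ Fintype.card V)
    (u w : V) (hadj : G.Adj u w) : 1 ≤ ell G q := by
  classical
  let H1 : SimpleGraph V :=
    { Adj := fun a b => (a = u ∧ b = w) ∨ (a = w ∧ b = u)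
      symm := ⟨by rintro a b (⟨rfl, rfl⟩ | ⟨rfl, rfl⟩) <;> simp⟩
      loopless := ⟨by rintro a (⟨rfl, rfl⟩ | ⟨rfl, rfl⟩) <;> exact G.loopless.irrefl _ hadj⟩ }
  have hne : u ≠ w := hadj.ne
  have hle : H1 ≤ G := by rintro a b (⟨rfl, rfl⟩ | ⟨rfl, rfl⟩); exact hadj; exact hadj.symm
  -- reachability invariant
  have hinv : ∀ x y : V, H1.Reachable x y → x = y ∨ ((x = u ∨ x = w) ∧ (y = u ∨ y = w)) := by
    intro x y h
    exact reach_inv (H := H1) (r := fun a b => (a = u ∨ a = w) ∧ (b = u ∨ b = w))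
      (by rintro a b (⟨rfl, rfl⟩ | ⟨rfl, rfl⟩) <;> simp)
      (by rintro a b c ⟨h1, _⟩ ⟨_, h2⟩; exact ⟨h1, h2⟩) h
  -- supports
  have hsupp : ∀ C : H1.ConnectedComponent, ∀ x, H1.connectedComponentMk x = C →
      ((x ≠ u ∧ x ≠ w ∧ C.supp = {x}) ∨ ((x = u ∨ x = w) ∧ C.supp ⊆ {u, w})) := by
    intro C x hx
    by_cases hxu : x = u ∨ x = w
    · refine Or.inr ⟨hxu, ?_⟩
      intro y hy
      rw [← hx, ConnectedComponent.mem_supp_iff, ConnectedComponent.eq] at hy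
      rcases hinv y x hy with rfl | ⟨h1, _⟩
      · exact hxu
      · exact h1
    · push_neg at hxu
      refine Or.inl ⟨hxu.1, hxu.2, ?_⟩
      ext y
      rw [← hx, ConnectedComponent.mem_supp_iff, ConnectedComponent.eq]
      constructor
      · intro hy
        rcases hinv y x hy with rfl | ⟨_, h2⟩
        · rfl
        · exact absurd h2 (by push_neg; exact hxu)
      · rintro rfl; exact Reachable.refl _
  have hinS : inS G H1 q := by
    refine ⟨hle, ?_, ?_⟩
    · -- not connected: take z different from u and w
      obtain ⟨z, hz⟩ : ∃ z : V, z ≠ u ∧ z ≠ w := by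
        by_contra hcz
        push_neg at hcz
        have : (Finset.univ : Finset V) ⊆ {u, w} := by
          intro z _
          rcases em (z = u) with rfl | hzz
          · exact Finset.mem_insert_self _ _
          · rw [hcz z hzz]; exact Finset.mem_insert_of_mem (Finset.mem_singleton_self _)
        have := Finset.card_le_card this
        have h2 : ({u, w} : Finset V).card ≤ 2 := Finset.card_insert_le _ _ |>.trans (by simp)
        rw [Finset.card_univ] at this
        omega
      intro hc
      have := hc.preconnected z u
      rcases hinv z u this with rfl | ⟨h1, _⟩
      · exact hz.1 rfl
      · rcases h1 with h | h
        · exact hz.1 h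
        · exact hz.2 h
    · intro C D hCD
      obtain ⟨x, hx⟩ := C.exists_rep
      obtain ⟨y, hy⟩ := D.exists_rep
      have hCs := hsupp C x hx
      have hDs := hsupp D y hy
      have huw : ({u, w} : Set V).ncard ≤ 2 := by
        apply (Set.ncard_insert_le _ _).trans
        simp
      have key : ∀ (E F : H1.ConnectedComponent) (a b : V),
          H1.connectedComponentMk a = E → H1.connectedComponentMk b = F → E ≠ F →
          (a = u ∨ a = w) → (b = u ∨ b = w) → False := by
        intro E F a b ha hb hEF haa hbb
        apply hEF
        rw [← ha, ← hb]
        apply ConnectedComponent.sound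
        have h1 : H1.Reachable u w := Adj.reachable (by simp [H1])
        rcases haa with rfl | rfl <;> rcases hbb with rfl | rfl
        · rfl
        · exact h1
        · exact h1.symm
        · rfl
      rcases hCs with ⟨_, _, hC1⟩ | ⟨hCx, hC2⟩ <;> rcases hDs with ⟨_, _, hD1⟩ | ⟨hDx, hD2⟩
      · rw [hC1, hD1]; simp [Set.ncard_singleton]; omega
      · rw [hC1, Set.ncard_singleton]
        have := Set.ncard_le_ncard hD2 (Set.toFinite _)
        omega
      · rw [hD1, Set.ncard_singleton]
        have := Set.ncard_le_ncard hC2 (Set.toFinite _)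
        omega
      · exact absurd (key C D x y hx hy hCD hCx hDx) (by simp)
  have hedge : 1 ≤ H1.edgeSet.ncard := by
    have : s(u, w) ∈ H1.edgeSet := by simp [mem_edgeSet, H1]
    have hpos := (Set.ncard_pos (Set.toFinite _)).mpr ⟨_, this⟩
    omega
  exact le_trans hedge (le_ell hinS)

lemma supp_djt {K : SimpleGraph V} {C D : K.ConnectedComponent} (h : C ≠ D) :
    Disjoint C.supp D.supp := by
  rw [Set.disjoint_left]
  intro x hx hx'
  rw [ConnectedComponent.mem_supp_iff] at hx hx'
  exact h (hx ▸ hx')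

lemma ncard_split (s : Set V) (p : V → Prop) :
    s.ncard = {w ∈ s | p w}.ncard + {w ∈ s | ¬ p w}.ncard := by
  classical
  rw [← Set.ncard_union_eq (by
      rw [Set.disjoint_left]; rintro x ⟨_, hx⟩ ⟨_, hx'⟩; exact hx' hx)
    (Set.toFinite _) (Set.toFinite _)]
  congr 1
  ext x
  by_cases hx : p x <;> simp [hx]

lemma filter_ncard (A : Finset V) (s : Set V) (h : ∀ x, x ∈ A ↔ x ∈ s)
    (p : V → Prop) [DecidablePred p] :
    (A.filter p).card = {x ∈ s | p x}.ncard := by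
  rw [← Set.ncard_coe_finset]
  congr 1
  ext x
  simp [h x]

lemma surgery (G : SimpleGraph V) (hG : IsCompMultipartite G) {q : ℕ} {H : SimpleGraph V}
    (hH : inS G H q) (hmaxsize : H.edgeSet.ncard = ell G q)
    (C1 C2 : H.ConnectedComponent) (hne : C1 ≠ C2)
    (h1 : C1.supp.ncard = orI H 1) (h2 : C2.supp.ncard = orI H 2)
    (hothers : ∀ C, C ≠ C1 → C ≠ C2 → C.supp.ncard ≤ orI H 3)
    (hn1big : 2 ≤ C1.supp.ncard)
    (hlt : orI H 1 + orI H 3 < q)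
    (hthird : ∃ C3 : H.ConnectedComponent, C3 ≠ C1 ∧ C3 ≠ C2) :
    ∃ H' : SimpleGraph V, inS G H' q ∧ H'.edgeSet.ncard = ell G q ∧
      orI H 1 + 1 ≤ orI H' 1 := by
  classical
  have hAdjIff : ∀ x y, H.Adj x y ↔ G.Adj x y ∧ H.Reachable x y := adj_iff_of_max hH hmaxsize
  have hnsym : ∀ a b : V, ¬ G.Adj a b → ¬ G.Adj b a := fun a b h h2 => h h2.symm
  have hn21 : C2.supp.ncard ≤ C1.supp.ncard := by
    rw [h1, h2]; exact orList_getD_anti H (by norm_num)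
  -- pick the good vertex v ∈ C2
  obtain ⟨v, hvB, hgoodF⟩ := exists_good_vertex G hG
    ((Set.toFinite C1.supp).toFinset) ((Set.toFinite C2.supp).toFinset)
    (by rw [Set.Finite.toFinset_nonempty]; exact supp_nonempty C2)
    (by rw [← Set.ncard_eq_toFinset_card, ← Set.ncard_eq_toFinset_card]; exact hn21)
  have hv2 : v ∈ C2.supp := (Set.Finite.mem_toFinset _).mp hvB
  have hgood : {w ∈ C1.supp | ¬ G.Adj v w}.ncard + C2.supp.ncard
      ≤ {w ∈ C2.supp | ¬ G.Adj v w}.ncard + C1.supp.ncard := by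
    rw [← filter_ncard _ _ (fun x => Set.Finite.mem_toFinset _),
      ← filter_ncard _ _ (fun x => Set.Finite.mem_toFinset _),
      Set.ncard_eq_toFinset_card C1.supp (Set.toFinite _),
      Set.ncard_eq_toFinset_card C2.supp (Set.toFinite _)]
    exact hgoodF
  have hv1 : v ∉ C1.supp := fun h => hne (by
    rw [ConnectedComponent.mem_supp_iff] at h hv2
    exact h ▸ hv2)
  -- v has a G-neighbour in C1
  obtain ⟨u, hu1, hadjvu⟩ : ∃ u ∈ C1.supp, G.Adj v u := by
    obtain ⟨a, b, ha, hb, hab⟩ := (Set.one_lt_ncard_iff (Set.toFinite _)).mp hn1big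
    have hreach : H.Reachable a b := by
      rw [ConnectedComponent.mem_supp_iff] at ha hb
      exact ConnectedComponent.exact (ha.trans hb.symm)
    obtain ⟨p⟩ := hreach
    cases p with
    | nil => exact absurd rfl hab
    | @cons _ c _ hadj p =>
      have hc1 : c ∈ C1.supp := by
        rw [ConnectedComponent.mem_supp_iff] at ha ⊢
        rw [← ha]
        exact ConnectedComponent.sound hadj.reachable.symm
      by_contra hcon
      push_neg at hcon
      exact hG a v c (hnsym v a (hcon a ha)) (hcon c hc1) (hH.1 hadj)
  -- the new graph
  set B1 : Set V := insert v C1.supp with hB1def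
  have huB1 : u ∈ B1 := Set.mem_insert_of_mem _ hu1
  have hvB1 : v ∈ B1 := Set.mem_insert _ _
  let H' : SimpleGraph V :=
    { Adj := fun a b => G.Adj a b ∧
        ((a ∈ B1 ∧ b ∈ B1) ∨ (a ∉ B1 ∧ b ∉ B1 ∧ H.Reachable a b))
      symm := ⟨by
        rintro a b ⟨hg, ⟨h1, h2⟩ | ⟨h1, h2, h3⟩⟩
        · exact ⟨hg.symm, Or.inl ⟨h2, h1⟩⟩
        · exact ⟨hg.symm, Or.inr ⟨h2, h1, h3.symm⟩⟩⟩
      loopless := ⟨fun a h => G.loopless.irrefl a h.1⟩ }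
  have hH'le : H' ≤ G := fun a b h => h.1
  -- reachability invariant
  have hRinv : ∀ x y, H'.Reachable x y → x = y ∨
      ((x ∈ B1 ∧ y ∈ B1) ∨ (x ∉ B1 ∧ y ∉ B1 ∧ H.Reachable x y)) := by
    intro x y h
    refine reach_inv (H := H') (r := fun a b =>
      (a ∈ B1 ∧ b ∈ B1) ∨ (a ∉ B1 ∧ b ∉ B1 ∧ H.Reachable a b)) (fun a b hab => hab.2) ?_ h
    rintro a b c (⟨ha, hb⟩ | ⟨ha, hb, hab⟩) (⟨hb', hc⟩ | ⟨hb', hc, hbc⟩)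
    · exact Or.inl ⟨ha, hc⟩
    · exact absurd hb hb'
    · exact absurd hb' hb
    · exact Or.inr ⟨ha, hc, hab.trans hbc⟩
  -- B1 is contained in the component of v
  have hB1conn : ∀ x ∈ B1, H'.Reachable v x := by
    have step : ∀ x y, x ∈ C1.supp → H.Adj x y → H'.Adj x y := by
      intro x y hx hxy
      have hy : y ∈ C1.supp := by
        rw [ConnectedComponent.mem_supp_iff] at hx ⊢
        rw [← hx]
        exact ConnectedComponent.sound hxy.reachable.symm
      exact ⟨hH.1 hxy, Or.inl ⟨Set.mem_insert_of_mem _ hx, Set.mem_insert_of_mem _ hy⟩⟩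
    have walkt : ∀ x y, (p : H.Walk x y) → x ∈ C1.supp → H'.Reachable x y := by
      intro x y p
      induction p with
      | nil => exact fun _ => Reachable.refl _
      | @cons a b c hadj p ih =>
        intro hx
        have hb : b ∈ C1.supp := by
          rw [ConnectedComponent.mem_supp_iff] at hx ⊢
          rw [← hx]
          exact ConnectedComponent.sound hadj.reachable.symm
        exact ((step a b hx hadj).reachable).trans (ih hb)
    intro x hx
    rcases Set.mem_insert_iff.mp hx with rfl | hx1
    · exact Reachable.refl _
    · have hvu : H'.Reachable v u := Adj.reachable ⟨hadjvu, Or.inl ⟨hvB1, huB1⟩⟩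
      have hux : H.Reachable u x := by
        rw [ConnectedComponent.mem_supp_iff] at hu1 hx1
        exact ConnectedComponent.exact (hu1.trans hx1.symm)
      obtain ⟨p⟩ := hux
      exact hvu.trans (walkt u x p hu1)
  have hsuppv : (H'.connectedComponentMk v).supp = B1 := by
    ext x
    rw [ConnectedComponent.mem_supp_iff, ConnectedComponent.eq]
    constructor
    · intro h
      rcases hRinv x v h with rfl | (⟨hx, _⟩ | ⟨_, hv', _⟩)
      · exact hvB1
      · exact hx
      · exact absurd hvB1 hv'
    · intro hx
      exact (hB1conn x hx).symm
  have hcardB1 : B1.ncard = C1.supp.ncard + 1 :=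
    Set.ncard_insert_of_notMem hv1 (Set.toFinite _)
  -- components outside B1
  have hsubout : ∀ x, x ∉ B1 →
      (H'.connectedComponentMk x).supp ⊆ (H.connectedComponentMk x).supp \ B1 := by
    intro x hx y hy
    rw [ConnectedComponent.mem_supp_iff, ConnectedComponent.eq] at hy
    rcases hRinv y x hy with rfl | (⟨_, hx'⟩ | ⟨hy', _, hreach⟩)
    · exact ⟨by rw [ConnectedComponent.mem_supp_iff], hx⟩
    · exact absurd hx' hx
    · exact ⟨by rw [ConnectedComponent.mem_supp_iff]; exact ConnectedComponent.sound hreach,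
        hy'⟩
  -- a third component gives a vertex outside B1 not reachable from v
  obtain ⟨C3, hC31, hC32⟩ := hthird
  obtain ⟨z, hz3⟩ := supp_nonempty C3
  have hz1 : z ∉ B1 := by
    rintro (rfl | hz1)
    · rw [ConnectedComponent.mem_supp_iff] at hz3 hv2
      exact hC32 (hz3 ▸ hv2)
    · rw [ConnectedComponent.mem_supp_iff] at hz3 hz1
      exact hC31 (hz3 ▸ hz1)
  have hzv : ¬ H'.Reachable v z := by
    intro h
    rcases hRinv v z h with rfl | (⟨_, hz'⟩ | ⟨hv', _, _⟩)
    · exact hz1 hvB1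
    · exact hz1 hz'
    · exact hv' hvB1
  -- H' is in S_q(G)
  have hq1 : C1.supp.ncard + C2.supp.ncard ≤ q := hH.2.2 C1 C2 hne
  have hn2pos : 0 < C2.supp.ncard := ncard_supp_pos C2
  have hinS' : inS G H' q := by
    refine ⟨hH'le, ?_, ?_⟩
    · intro hc
      exact hzv (hc.preconnected v z)
    · -- pairwise bounds
      have key : ∀ D : H'.ConnectedComponent, D ≠ H'.connectedComponentMk v →
          D.supp.ncard + (C1.supp.ncard + 1) ≤ q := by
        intro D hD
        obtain ⟨y, hy⟩ := D.exists_rep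
        have hy' : H'.connectedComponentMk y = D := hy
        have hyB1 : y ∉ B1 := by
          intro hyB
          exact hD (by rw [← hy']; exact ConnectedComponent.sound ((hB1conn y hyB).symm))
        have hsub := hsubout y hyB1
        rw [← hy']
        set HY := H.connectedComponentMk y with hHYdef
        have hyH : y ∈ HY.supp := by rw [ConnectedComponent.mem_supp_iff]
        by_cases hY1 : HY = C1
        · exact absurd (Set.mem_insert_of_mem _ (hY1 ▸ hyH)) hyB1
        by_cases hY2 : HY = C2
        · -- D ⊆ C2 \ {v}
          have hsub2 : (H'.connectedComponentMk y).supp ⊆ C2.supp \ {v} := by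
            intro w hw
            obtain ⟨hw1, hw2⟩ := hsub hw
            exact ⟨hY2 ▸ hw1, fun hwv => hw2 (hwv ▸ hvB1)⟩
          have hle2 : (H'.connectedComponentMk y).supp.ncard ≤ C2.supp.ncard - 1 := by
            have := Set.ncard_le_ncard hsub2 (Set.toFinite _)
            rwa [Set.ncard_diff_singleton_of_mem hv2] at this
          omega
        · -- D ⊆ HY, |HY| ≤ or3
          have hle3 : (H'.connectedComponentMk y).supp.ncard ≤ orI H 3 := by
            refine le_trans (Set.ncard_le_ncard (fun w hw => (hsub hw).1) (Set.toFinite _)) ?_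
            exact hothers HY hY1 hY2
          have := hlt
          rw [← h1] at this
          omega
      intro C D hCD
      by_cases hC : C = H'.connectedComponentMk v
      · rw [hC, hsuppv, hcardB1]
        rw [Nat.add_comm]
        exact key D (hC ▸ hCD.symm)
      · by_cases hD : D = H'.connectedComponentMk v
        · rw [hD, hsuppv, hcardB1]
          exact key C (hD ▸ hCD)
        · -- both outside B1
          obtain ⟨a, ha0⟩ := C.exists_rep
          obtain ⟨b, hb0⟩ := D.exists_rep
          have ha : H'.connectedComponentMk a = C := ha0
          have hb : H'.connectedComponentMk b = D := hb0
          have haB1 : a ∉ B1 := by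
            intro haB
            exact hC (by rw [← ha]; exact ConnectedComponent.sound ((hB1conn a haB).symm))
          have hbB1 : b ∉ B1 := by
            intro hbB
            exact hD (by rw [← hb]; exact ConnectedComponent.sound ((hB1conn b hbB).symm))
          have hsa := hsubout a haB1
          have hsb := hsubout b hbB1
          rw [← ha, ← hb]
          by_cases hab : H.connectedComponentMk a = H.connectedComponentMk b
          · -- same old component: supports are disjoint subsets
            have hdj : Disjoint (H'.connectedComponentMk a).supp
                (H'.connectedComponentMk b).supp := supp_djt (by rw [ha, hb]; exact hCD)
            have hsubU : (H'.connectedComponentMk a).supp ∪ (H'.connectedComponentMk b).supp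
                ⊆ (H.connectedComponentMk a).supp := by
              rintro w (hw | hw)
              · exact (hsa hw).1
              · exact hab ▸ (hsb hw).1
            have hU := Set.ncard_le_ncard hsubU (Set.toFinite _)
            rw [Set.ncard_union_eq hdj (Set.toFinite _) (Set.toFinite _)] at hU
            have hbig : (H.connectedComponentMk a).supp.ncard ≤ orI H 1 :=
              comp_le_or1 H _
            rw [← h1] at hbig
            omega
          · have := hH.2.2 _ _ hab
            have hA := Set.ncard_le_ncard (fun w hw => (hsa hw).1) (Set.toFinite _)
            have hB := Set.ncard_le_ncard (fun w hw => (hsb hw).1) (Set.toFinite _)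
            omega
  -- edge counts
  have hsame : {e ∈ H'.edgeSet | v ∉ e} = {e ∈ H.edgeSet | v ∉ e} := by
    ext e
    induction e with
    | _ a b =>
      simp only [Set.mem_setOf_eq, mem_edgeSet, Sym2.mem_iff, not_or]
      constructor
      · rintro ⟨⟨hg, hcase⟩, hva, hvb⟩
        refine ⟨(hAdjIff a b).mpr ⟨hg, ?_⟩, hva, hvb⟩
        rcases hcase with ⟨ha, hb⟩ | ⟨_, _, hreach⟩
        · have ha1 : a ∈ C1.supp := by
            rcases Set.mem_insert_iff.mp ha with h | h
            · exact absurd h.symm hva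
            · exact h
          have hb1 : b ∈ C1.supp := by
            rcases Set.mem_insert_iff.mp hb with h | h
            · exact absurd h.symm hvb
            · exact h
          rw [ConnectedComponent.mem_supp_iff] at ha1 hb1
          exact ConnectedComponent.exact (ha1.trans hb1.symm)
        · exact hreach
      · rintro ⟨hadj, hva, hvb⟩
        obtain ⟨hg, hreach⟩ := (hAdjIff a b).mp hadj
        refine ⟨⟨hg, ?_⟩, hva, hvb⟩
        by_cases ha1 : a ∈ C1.supp
        · have hb1 : b ∈ C1.supp := by
            rw [ConnectedComponent.mem_supp_iff] at ha1 ⊢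
            exact (ConnectedComponent.sound hreach.symm).trans ha1
          exact Or.inl ⟨Set.mem_insert_of_mem _ ha1, Set.mem_insert_of_mem _ hb1⟩
        · have hb1 : b ∉ C1.supp := by
            intro hb1
            apply ha1
            rw [ConnectedComponent.mem_supp_iff] at hb1 ⊢
            exact (ConnectedComponent.sound hreach).trans hb1
          refine Or.inr ⟨?_, ?_, hreach⟩
          · rintro (rfl | h)
            · exact hva rfl
            · exact ha1 h
          · rintro (rfl | h)
            · exact hvb rfl
            · exact hb1 h
  have hNH : H.neighborSet v = {w ∈ C2.supp | G.Adj v w} := by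
    ext w
    rw [mem_neighborSet, hAdjIff]
    constructor
    · rintro ⟨hg, hreach⟩
      refine ⟨?_, hg⟩
      rw [ConnectedComponent.mem_supp_iff] at hv2 ⊢
      exact (ConnectedComponent.sound hreach.symm).trans hv2
    · rintro ⟨hw2, hg⟩
      refine ⟨hg, ?_⟩
      rw [ConnectedComponent.mem_supp_iff] at hv2 hw2
      exact ConnectedComponent.exact (hv2.trans hw2.symm)
  have hNH' : H'.neighborSet v = {w ∈ C1.supp | G.Adj v w} := by
    ext w
    rw [mem_neighborSet]
    show (G.Adj v w ∧ _) ↔ _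
    constructor
    · rintro ⟨hg, ⟨_, hw⟩ | ⟨hv', _, _⟩⟩
      · rcases Set.mem_insert_iff.mp hw with rfl | h
        · exact absurd hg (G.loopless.irrefl w)
        · exact ⟨h, hg⟩
      · exact absurd hvB1 hv'
    · rintro ⟨hw1, hg⟩
      exact ⟨hg, Or.inl ⟨hvB1, Set.mem_insert_of_mem _ hw1⟩⟩
  -- the counting
  have hsplit1 := ncard_split C1.supp (fun w => G.Adj v w)
  have hsplit2 := ncard_split C2.supp (fun w => G.Adj v w)
  have hNcard : (H.neighborSet v).ncard ≤ (H'.neighborSet v).ncard := by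
    rw [hNH, hNH']
    omega
  have hsplitH := ncard_edge_split H v
  have hsplitH' := ncard_edge_split H' v
  have hEcard : H.edgeSet.ncard ≤ H'.edgeSet.ncard := by
    rw [hsplitH, hsplitH', hsame]
    omega
  have hEell : H'.edgeSet.ncard = ell G q :=
    le_antisymm (le_ell hinS') (hmaxsize ▸ hEcard)
  refine ⟨H', hinS', hEell, ?_⟩
  have := comp_le_or1 H' (H'.connectedComponentMk v)
  rw [hsuppv, hcardB1, h1] at this
  exact this

end Aux

/-- Let `G` be a complete multi-partite graph of order `n` with at least two partite sets,
`2 ≤ q ≤ n−1`, and let `H` be a maximum-size member of `S_q(G)` whose largest component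
order is maximum among all maximum-size members.  Then `or₁(H) + or₃(H) = q`. -/
theorem stmt9 (G : SimpleGraph V) (hG : IsCompMultipartite G) (hGbot : G ≠ ⊥)
    (n : ℕ) (hn : Fintype.card V = n) (q : ℕ) (hq2 : 2 ≤ q) (hq : q ≤ n - 1)
    (H : SimpleGraph V) (hH : inS G H q) (hmaxsize : H.edgeSet.ncard = ell G q)
    (hmaxcomp : ∀ H' : SimpleGraph V, inS G H' q → H'.edgeSet.ncard = ell G q →
      orI H' 1 ≤ orI H 1) :
    orI H 1 + orI H 3 = q := by
  classical
  have hn3 : 3 ≤ Fintype.card V := by omega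
  have hVne : Nonempty V := Fintype.card_pos_iff.mp (by omega)
  -- H is disconnected: two distinct components
  obtain ⟨x, y, hxy⟩ : ∃ x y : V, ¬ H.Reachable x y := by
    by_contra h
    push_neg at h
    exact hH.2.1 ((connected_iff H).mpr ⟨fun a b => h a b, hVne⟩)
  have hCxy : H.connectedComponentMk x ≠ H.connectedComponentMk y :=
    fun h => hxy (ConnectedComponent.exact h)
  -- a third component exists
  obtain ⟨z, hzx, hzy⟩ : ∃ z : V, H.connectedComponentMk z ≠ H.connectedComponentMk x ∧
      H.connectedComponentMk z ≠ H.connectedComponentMk y := by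
    by_contra h
    push_neg at h
    have hcov : (Set.univ : Set V) ⊆
        (H.connectedComponentMk x).supp ∪ (H.connectedComponentMk y).supp := by
      intro w _
      rcases em (H.connectedComponentMk w = H.connectedComponentMk x) with hw | hw
      · exact Or.inl ((ConnectedComponent.mem_supp_iff _ _).mpr hw)
      · exact Or.inr ((ConnectedComponent.mem_supp_iff _ _).mpr (h w hw))
    have h1 := Set.ncard_le_ncard hcov (Set.toFinite _)
    have h2 := Set.ncard_union_le (H.connectedComponentMk x).supp
      (H.connectedComponentMk y).supp
    have h3 := hH.2.2 _ _ hCxy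
    rw [Set.ncard_univ, Nat.card_eq_fintype_card, hn] at h1
    omega
  have hthree : 3 ≤ (orList H).length := by
    rw [orList_length]
    letI : Fintype H.ConnectedComponent := Fintype.ofFinite _
    rw [Nat.card_eq_fintype_card]
    have hsub : ({H.connectedComponentMk x, H.connectedComponentMk y,
        H.connectedComponentMk z} : Finset H.ConnectedComponent) ⊆ Finset.univ :=
      Finset.subset_univ _
    have hcard : ({H.connectedComponentMk x, H.connectedComponentMk y,
        H.connectedComponentMk z} : Finset H.ConnectedComponent).card = 3 := by
      rw [Finset.card_insert_of_notMem (by simp [hCxy, hzx.symm]),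
        Finset.card_insert_of_notMem (by simp [hzy.symm]), Finset.card_singleton]
    calc 3 = _ := hcard.symm
      _ ≤ _ := Finset.card_le_card hsub
  obtain ⟨C1, C2, hne12, h1, h2, hothers⟩ := three_comps H hthree
  have hsum12 : orI H 1 + orI H 2 ≤ q := by
    rw [← h1, ← h2]
    exact hH.2.2 C1 C2 hne12
  have hor32 : orI H 3 ≤ orI H 2 := orList_getD_anti H (by norm_num)
  have hor21 : orI H 2 ≤ orI H 1 := orList_getD_anti H (by norm_num)
  have hor3pos : 0 < orI H 3 := orI_pos H (by omega)
  have hle : orI H 1 + orI H 3 ≤ q := by omega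
  rcases Nat.lt_or_ge C1.supp.ncard 2 with hsmall | hbig
  · -- the largest component is a single vertex
    have hor1 : orI H 1 = 1 := by
      have := ncard_supp_pos C1
      omega
    have hor3 : orI H 3 = 1 := by
      rw [← h1, hor1] at *
      omega
    -- q must be 2
    rcases Nat.lt_or_ge q 3 with hq3 | hq3
    · rw [hor1, hor3]; omega
    · exfalso
      -- H has no edges
      have hE : H.edgeSet.ncard = 0 := by
        rw [Set.ncard_eq_zero (Set.toFinite _), Set.eq_empty_iff_forall_notMem]
        intro e he
        induction e with
        | _ a b =>
          rw [mem_edgeSet] at he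
          have hb : b ∈ (H.connectedComponentMk a).supp := by
            rw [ConnectedComponent.mem_supp_iff]
            exact ConnectedComponent.sound he.reachable.symm
          have ha : a ∈ (H.connectedComponentMk a).supp := by
            rw [ConnectedComponent.mem_supp_iff]
          have h2 : 1 < (H.connectedComponentMk a).supp.ncard :=
            (Set.one_lt_ncard_iff (Set.toFinite _)).mpr ⟨a, b, ha, hb, he.ne⟩
          have h3 := comp_le_or1 H (H.connectedComponentMk a)
          omega
      obtain ⟨u, w, hadj⟩ : ∃ u w : V, G.Adj u w := by
        by_contra h
        push_neg at h
        apply hGbot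
        ext a b
        simp only [bot_adj, iff_false]
        exact h a b
      have := ell_pos G q hq3 hn3 u w hadj
      rw [← hmaxsize, hE] at this
      omega
  · -- main case: suppose or1 + or3 < q and derive a contradiction
    refine le_antisymm hle (by_contra fun hcon => ?_)
    push_neg at hcon
    obtain ⟨C3, hC3⟩ : ∃ C3 : H.ConnectedComponent, C3 ≠ C1 ∧ C3 ≠ C2 := by
      by_contra h
      push_neg at h
      have h1' : H.connectedComponentMk x = C1 ∨ H.connectedComponentMk x = C2 := by
        rcases em (H.connectedComponentMk x = C1) with h' | h'
        · exact Or.inl h'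
        · exact Or.inr (h _ h')
      have h2' : H.connectedComponentMk y = C1 ∨ H.connectedComponentMk y = C2 := by
        rcases em (H.connectedComponentMk y = C1) with h' | h'
        · exact Or.inl h'
        · exact Or.inr (h _ h')
      have h3' : H.connectedComponentMk z = C1 ∨ H.connectedComponentMk z = C2 := by
        rcases em (H.connectedComponentMk z = C1) with h' | h'
        · exact Or.inl h'
        · exact Or.inr (h _ h')
      rcases h1' with h1' | h1' <;> rcases h2' with h2' | h2' <;> rcases h3' with h3' | h3'
      all_goals first
        | exact hCxy (h1'.trans h2'.symm)
        | exact hzx (h3'.trans h1'.symm)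
        | exact hzy (h3'.trans h2'.symm)
    obtain ⟨H', hinS', hells, hgt⟩ := surgery G hG hH hmaxsize C1 C2 hne12 h1 h2 hothers
      hbig hcon ⟨C3, hC3.1, hC3.2⟩
    have := hmaxcomp H' hinS' hells
    omega
end

section
/- Let G be a connected graph of order n and 2 ≤ q ≤ n−1. Then ℓ_q(G) ≥ max over (q−1)-element subsets S of V(G) of |E(G[S])|, equivalently ℓ_q(G) ≥ |E(G)| − min over (n−q+1)-element subsets S₀ of V(G) of |E_G(S₀)|, where E_G(S₀) is the set of edges of G incident with at least one vertex of S₀. -/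
open SimpleGraph

variable {V : Type} [Fintype V]

/-- `E_G(S)`: the set of edges of `G` incident with at least one vertex of `S`. -/
def incE (G : SimpleGraph V) (S : Finset V) : Set (Sym2 V) :=
  {e ∈ G.edgeSet | ∃ v ∈ S, v ∈ e}

/-- For a connected graph `G` of order `n` and `2 ≤ q ≤ n−1`:
`ℓ_q(G) ≥ |E(G[S])|` for every `(q−1)`-subset `S`, and equivalently
`ℓ_q(G) ≥ |E(G)| − |E_G(S₀)|` for every `(n−q+1)`-subset `S₀`. -/
theorem stmt10 (G : SimpleGraph V) (n : ℕ) (hn : Fintype.card V = n)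
    (hG : G.Connected) (q : ℕ) (hq2 : 2 ≤ q) (hq : q ≤ n - 1) :
    (∀ S : Finset V, S.card = q - 1 →
        (G.induce (S : Set V)).edgeSet.ncard ≤ ell G q) ∧
    (∀ S₀ : Finset V, S₀.card = n - q + 1 →
        G.edgeSet.ncard - (incE G S₀).ncard ≤ ell G q) := by
  classical
  have hqn : q + 1 ≤ n := by omega
  have hbdd : BddAbove {m | ∃ H : SimpleGraph V, inS G H q ∧ H.edgeSet.ncard = m} := by
    refine ⟨Fintype.card (Sym2 V), ?_⟩
    rintro m ⟨H, _, rfl⟩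
    simpa [Set.ncard_univ, Nat.card_eq_fintype_card] using
      Set.ncard_le_ncard (Set.subset_univ H.edgeSet) Set.finite_univ
  have part1 : ∀ S : Finset V, S.card = q - 1 →
      (G.induce (S : Set V)).edgeSet.ncard ≤ ell G q := by
    intro S hS
    let H : SimpleGraph V :=
      { Adj := fun a b => G.Adj a b ∧ a ∈ S ∧ b ∈ S
        symm := ⟨fun a b ⟨h, ha, hb⟩ => ⟨h.symm, hb, ha⟩⟩
        loopless := ⟨fun a ⟨h, _, _⟩ => G.loopless.irrefl a h⟩ }
    have hiso : ∀ v ∉ S, ∀ w, H.Reachable v w → w = v := by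
      intro v hv w hr
      obtain ⟨p⟩ := hr
      cases p with
      | nil => rfl
      | cons h _ => exact absurd h.2.1 hv
    -- two vertices outside S
    have hcompl : 2 ≤ Sᶜ.card := by
      rw [Finset.card_compl, hS, hn]; omega
    obtain ⟨u, hu, v, hv, huv⟩ := Finset.one_lt_card.mp hcompl
    have hu' : u ∉ S := Finset.mem_compl.mp hu
    have hv' : v ∉ S := Finset.mem_compl.mp hv
    have hdisc : ¬ H.Connected := by
      intro hc
      exact huv (hiso u hu' v (hc.preconnected u v)).symm
    have key : ∀ C : H.ConnectedComponent, C.supp ⊆ (S : Set V) ∨ C.supp.ncard ≤ 1 := by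
      intro C
      by_cases h : C.supp ⊆ (S : Set V)
      · exact Or.inl h
      · right
        obtain ⟨w, hw, hwS⟩ := Set.not_subset.mp h
        have hsub : C.supp ⊆ {w} := by
          intro x hx
          have h1 : H.Reachable w x := by
            rw [SimpleGraph.ConnectedComponent.mem_supp_iff] at hx hw
            exact SimpleGraph.ConnectedComponent.exact (hw.trans hx.symm)
          have := hiso w (by simpa using hwS) x h1
          simp [this]
        calc C.supp.ncard ≤ ({w} : Set V).ncard :=
              Set.ncard_le_ncard hsub (Set.finite_singleton w)
          _ = 1 := Set.ncard_singleton w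
    have hcomp : ∀ C D : H.ConnectedComponent, C ≠ D →
        C.supp.ncard + D.supp.ncard ≤ q := by
      intro C D hCD
      have hdisj : Disjoint C.supp D.supp := by
        rw [Set.disjoint_left]
        intro a haC haD
        rw [SimpleGraph.ConnectedComponent.mem_supp_iff] at haC haD
        exact hCD (haC ▸ haD ▸ rfl)
      have hSn : (S : Set V).ncard = q - 1 := by
        rw [Set.ncard_coe_finset, hS]
      rcases key C with hC | hC <;> rcases key D with hD | hD
      · have hsub : C.supp ∪ D.supp ⊆ (S : Set V) := Set.union_subset hC hD
        have h2 := Set.ncard_le_ncard hsub S.finite_toSet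
        rw [Set.ncard_union_eq hdisj (Set.toFinite _) (Set.toFinite _)] at h2
        omega
      · have h2 := Set.ncard_le_ncard hC S.finite_toSet
        omega
      · have h2 := Set.ncard_le_ncard hD S.finite_toSet
        omega
      · omega
    have hinS : inS G H q := ⟨fun a b h => h.1, hdisc, hcomp⟩
    have hinj : Function.Injective (Sym2.map (Subtype.val : ↥(S : Set V) → V)) :=
      Sym2.map.injective Subtype.val_injective
    have himg : Sym2.map Subtype.val '' (G.induce (S : Set V)).edgeSet ⊆ H.edgeSet := by
      rintro e ⟨e', he', rfl⟩
      induction e' using Sym2.ind with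
      | _ a b =>
        rw [SimpleGraph.mem_edgeSet] at he'
        rw [Sym2.map_pair_eq, SimpleGraph.mem_edgeSet]
        exact ⟨he', a.2, b.2⟩
    have hedge : (G.induce (S : Set V)).edgeSet.ncard ≤ H.edgeSet.ncard := by
      rw [← Set.ncard_image_of_injective _ hinj]
      exact Set.ncard_le_ncard himg (Set.toFinite _)
    exact hedge.trans (le_csSup hbdd ⟨H, hinS, rfl⟩)
  refine ⟨part1, ?_⟩
  intro S₀ hS₀
  have hScard : S₀ᶜ.card = q - 1 := by
    rw [Finset.card_compl, hS₀, hn]; omega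
  have h1 := part1 S₀ᶜ hScard
  have hinj : Function.Injective (Sym2.map (Subtype.val : ↥((S₀ᶜ : Finset V) : Set V) → V)) :=
    Sym2.map.injective Subtype.val_injective
  have hsub : G.edgeSet ⊆ incE G S₀ ∪
      (Sym2.map Subtype.val '' (G.induce ((S₀ᶜ : Finset V) : Set V)).edgeSet) := by
    intro e he
    induction e using Sym2.ind with
    | _ a b =>
      by_cases ha : a ∈ S₀
      · exact Or.inl ⟨he, a, ha, by simp⟩
      · by_cases hb : b ∈ S₀
        · exact Or.inl ⟨he, b, hb, by simp⟩
        · refine Or.inr ⟨s(⟨a, by simp [ha]⟩, ⟨b, by simp [hb]⟩), ?_, by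
            simp [Sym2.map_pair_eq]⟩
          rw [SimpleGraph.mem_edgeSet] at he ⊢
          simpa using he
  have hcard : G.edgeSet.ncard ≤ (incE G S₀).ncard +
      (G.induce ((S₀ᶜ : Finset V) : Set V)).edgeSet.ncard := by
    calc G.edgeSet.ncard
        ≤ (incE G S₀ ∪
          (Sym2.map Subtype.val '' (G.induce ((S₀ᶜ : Finset V) : Set V)).edgeSet)).ncard :=
          Set.ncard_le_ncard hsub (Set.toFinite _)
      _ ≤ (incE G S₀).ncard +
          (Sym2.map Subtype.val '' (G.induce ((S₀ᶜ : Finset V) : Set V)).edgeSet).ncard :=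
          Set.ncard_union_le _ _
      _ = _ := by rw [Set.ncard_image_of_injective _ hinj]
  omega
end

section
/- For the complete tripartite graph K_{3,3,3} and q = 6, ℓ_q(K_{3,3,3}) = 9; in particular ℓ_q strictly exceeds the maximum number of edges of an induced subgraph on q−1 = 5 vertices, which is 8. -/
open SimpleGraph

variable {V : Type} [Fintype V]

open Finset

set_option maxRecDepth 40000

abbrev V9 := Σ _ : Fin 3, Fin 3
abbrev G3 : SimpleGraph V9 := completeMultipartiteGraph fun _ : Fin 3 => Fin 3

def H0 : SimpleGraph V9 where
  Adj u v := u.2 = v.2 ∧ u.1 ≠ v.1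
  symm := by constructor; rintro u v ⟨h1, h2⟩; exact ⟨h1.symm, h2.symm⟩
  loopless := by constructor; rintro v ⟨h1, h2⟩; exact h2 rfl

instance : DecidableRel H0.Adj := fun u v => by unfold H0; exact inferInstanceAs (Decidable (_ ∧ _))

lemma H0_le : H0 ≤ G3 := fun _ _ h => h.2

lemma H0_reach {u v : V9} (h : H0.Reachable u v) : u.2 = v.2 := by
  obtain ⟨w⟩ := h
  induction w with
  | nil => rfl
  | cons h p ih => exact h.1.trans ih

lemma H0_mk (u v : V9) : H0.connectedComponentMk u = H0.connectedComponentMk v ↔ u.2 = v.2 := by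
  rw [ConnectedComponent.eq]
  constructor
  · exact H0_reach
  · intro h
    by_cases huv : u = v
    · subst huv; rfl
    · exact Adj.reachable ⟨h, fun h1 => huv (Sigma.ext h1 (heq_of_eq h))⟩

lemma H0_not_conn : ¬ H0.Connected := by
  intro h
  have := H0_reach (h.preconnected ⟨0,0⟩ ⟨0,1⟩)
  simp at this

lemma H0_supp (C : H0.ConnectedComponent) : C.supp.ncard = 3 := by
  refine C.ind fun v => ?_
  have hset : (H0.connectedComponentMk v).supp = {w : V9 | w.2 = v.2} := by
    ext w
    simp only [ConnectedComponent.mem_supp_iff, Set.mem_setOf_eq, H0_mk]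
  rw [hset, Set.ncard_eq_toFinset_card', Set.toFinset_setOf]
  clear hset; revert v; decide

lemma H0_card : H0.edgeSet.ncard = 9 := by
  rw [Set.ncard_eq_toFinset_card']
  rw [show H0.edgeSet.toFinset = H0.edgeFinset from rfl]
  decide

def tt : ℕ → ℕ
  | 0 => 0 | 1 => 0 | 2 => 2 | 3 => 6 | 4 => 10 | 5 => 16 | k => k*k
lemma tt_le_two_mul {k : ℕ} (h : k ≤ 3) : tt k ≤ 2 * k := by interval_cases k <;> decide
lemma tt_le_self {k : ℕ} (h : k ≤ 2) : tt k ≤ k := by interval_cases k <;> decide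
lemma tt_zero {k : ℕ} (h : k ≤ 1) : tt k = 0 := by interval_cases k <;> decide
lemma tt_bound (a0 a1 a2 : ℕ) (h0 : a0 ≤ 3) (h1 : a1 ≤ 3) (h2 : a2 ≤ 3) :
    a0*(a0+a1+a2-a0) + a1*(a0+a1+a2-a1) + a2*(a0+a1+a2-a2) ≤ tt (a0+a1+a2) := by
  interval_cases a0 <;> interval_cases a1 <;> interval_cases a2 <;> decide


lemma sum_filter_bound (F : Finset V9) :
    ∑ v ∈ F, (F.filter (fun w => w.1 ≠ v.1)).card ≤ tt F.card := by
  classical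
  set a : Fin 3 → ℕ := fun i => (F.filter (fun w => w.1 = i)).card with ha_def
  have ha : ∀ i, a i ≤ 3 := by
    intro i
    have hsub : F.filter (fun w => w.1 = i) ⊆ univ.filter (fun w : V9 => w.1 = i) :=
      Finset.filter_subset_filter _ (F.subset_univ)
    have h3 : ∀ j : Fin 3, (univ.filter (fun w : V9 => w.1 = j)).card = 3 := by decide
    calc a i ≤ _ := Finset.card_le_card hsub
    _ = 3 := h3 i
  have hk : ∑ i, a i = F.card :=
    (Finset.card_eq_sum_card_fiberwise (f := fun v : V9 => v.1) (t := univ)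
      (fun v _ => Finset.mem_univ v.1)).symm
  have hv : ∀ v ∈ F, (F.filter (fun w => w.1 ≠ v.1)).card = F.card - a v.1 := by
    intro v hv
    have := Finset.card_filter_add_card_filter_not (s := F) (p := fun w => w.1 = v.1)
    simp only [ne_eq, ha_def]
    omega
  calc ∑ v ∈ F, (F.filter (fun w => w.1 ≠ v.1)).card
      = ∑ v ∈ F, (F.card - a v.1) := Finset.sum_congr rfl hv
    _ = ∑ i : Fin 3, ∑ v ∈ F.filter (fun v => v.1 = i), (F.card - a v.1) :=
        (Finset.sum_fiberwise_of_maps_to (fun v _ => Finset.mem_univ v.1) _).symm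
    _ = ∑ i : Fin 3, a i * (F.card - a i) := by
        refine Finset.sum_congr rfl fun i _ => ?_
        rw [Finset.sum_congr rfl (fun v hv => by rw [(Finset.mem_filter.mp hv).2]),
          Finset.sum_const, smul_eq_mul]
    _ ≤ tt F.card := by
        rw [← hk]; simp only [Fin.sum_univ_three]
        exact tt_bound (a 0) (a 1) (a 2) (ha 0) (ha 1) (ha 2)


lemma ub (H : SimpleGraph V9) (hle : H ≤ G3) (hconn : ¬ H.Connected)
    (hq : ∀ C D : H.ConnectedComponent, C ≠ D → C.supp.ncard + D.supp.ncard ≤ 6) :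
    H.edgeSet.ncard ≤ 9 := by
  classical
  letI : DecidableRel H.Adj := Classical.decRel _
  haveI : Fintype H.ConnectedComponent := Fintype.ofFinite _
  set mk := H.connectedComponentMk with hmkdef
  set F : H.ConnectedComponent → Finset V9 := fun c => univ.filter (fun v => mk v = c) with hF
  set k : H.ConnectedComponent → ℕ := fun c => (F c).card with hkdef
  have hsupp : ∀ c : H.ConnectedComponent, c.supp.ncard = k c := by
    intro c
    rw [show c.supp = {v : V9 | mk v = c} from rfl, Set.ncard_eq_toFinset_card',
      Set.toFinset_setOf]
  have hk9 : ∑ c, k c = 9 := by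
    have h := Finset.card_eq_sum_card_fiberwise (f := mk) (s := (univ : Finset V9)) (t := univ)
      (fun v _ => Finset.mem_univ _)
    have h9 : (univ : Finset V9).card = 9 := by decide
    rw [h9] at h
    exact h.symm
  have hpos : ∀ c, 1 ≤ k c := by
    intro c
    obtain ⟨v, rfl⟩ := c.exists_rep
    refine Finset.card_pos.mpr ⟨v, ?_⟩
    show v ∈ univ.filter (fun u => mk u = Quot.mk H.Reachable v)
    exact Finset.mem_filter.mpr ⟨Finset.mem_univ v, rfl⟩
  have hpair : ∀ c d, c ≠ d → k c + k d ≤ 6 := fun c d h => by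
    rw [← hsupp, ← hsupp]; exact hq c d h
  obtain ⟨u0, v0, hne0⟩ : ∃ u v : V9, mk u ≠ mk v := by
    by_contra hall
    push_neg at hall
    exact hconn (Connected.mk fun u v => (ConnectedComponent.eq).mp (hall u v))
  have hk5 : ∀ c, k c ≤ 5 := by
    intro c
    rcases ne_or_eq c (mk u0) with h | h
    · have := hpair c (mk u0) h; have := hpos (mk u0); omega
    · have := hpair c (mk v0) (by rw [h]; exact hne0); have := hpos (mk v0); omega
  have hdeg : ∀ v : V9, H.degree v ≤ ((F (mk v)).filter (fun w => w.1 ≠ v.1)).card := by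
    intro v
    rw [← card_neighborFinset_eq_degree]
    apply Finset.card_le_card
    intro w hw
    rw [mem_neighborFinset] at hw
    simp only [hF, Finset.mem_filter, Finset.mem_univ, true_and]
    exact ⟨(ConnectedComponent.eq.mpr hw.reachable).symm, fun h => (hle hw) h.symm⟩
  have htail : ∑ c, tt (k c) ≤ 18 := by
    by_cases hbig : ∃ c0, 4 ≤ k c0
    · obtain ⟨c0, hc0⟩ := hbig
      have h5 := hk5 c0
      have hoth : ∀ c, c ≠ c0 → k c ≤ 2 := fun c h => by have := hpair c c0 h; omega
      have hsplit : tt (k c0) + ∑ c ∈ univ.erase c0, tt (k c) = ∑ c, tt (k c) :=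
        Finset.add_sum_erase univ (fun c => tt (k c)) (Finset.mem_univ c0)
      have hke : k c0 + ∑ c ∈ univ.erase c0, k c = 9 := by
        rw [Finset.add_sum_erase univ k (Finset.mem_univ c0)]; exact hk9
      rcases (by omega : k c0 = 4 ∨ k c0 = 5) with h4 | h5'
      · have h1 : ∑ c ∈ univ.erase c0, tt (k c) ≤ ∑ c ∈ univ.erase c0, k c :=
          Finset.sum_le_sum fun c hc => tt_le_self (hoth c (Finset.ne_of_mem_erase hc))
        have h10 : tt (k c0) = 10 := by rw [h4]; decide
        omega
      · have h1 : ∑ c ∈ univ.erase c0, tt (k c) = 0 :=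
          Finset.sum_eq_zero fun c hc =>
            tt_zero (by have := hpair c c0 (Finset.ne_of_mem_erase hc); omega)
        have h16 : tt (k c0) = 16 := by rw [h5']; decide
        omega
    · push_neg at hbig
      calc ∑ c, tt (k c) ≤ ∑ c, 2 * k c :=
            Finset.sum_le_sum fun c _ => tt_le_two_mul (by have := hbig c; omega)
        _ = 2 * ∑ c, k c := (Finset.mul_sum _ _ _).symm
        _ = 18 := by rw [hk9]
  have hsum : ∑ v : V9, H.degree v ≤ 18 := by
    calc ∑ v : V9, H.degree v
        ≤ ∑ v : V9, ((F (mk v)).filter (fun w => w.1 ≠ v.1)).card :=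
          Finset.sum_le_sum fun v _ => hdeg v
      _ = ∑ c, ∑ v ∈ univ.filter (fun v => mk v = c),
            ((F (mk v)).filter (fun w => w.1 ≠ v.1)).card :=
          (Finset.sum_fiberwise_of_maps_to (fun v _ => Finset.mem_univ _) _).symm
      _ = ∑ c, ∑ v ∈ F c, ((F c).filter (fun w => w.1 ≠ v.1)).card := by
          refine Finset.sum_congr rfl fun c _ => ?_
          refine Finset.sum_congr rfl fun v hv => ?_
          have hv' : mk v = c := by
            have hmem : v ∈ univ.filter (fun v => mk v = c) := hv
            exact (Finset.mem_filter.mp hmem).2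
          rw [hv']
      _ ≤ ∑ c, tt (k c) := Finset.sum_le_sum fun c _ => sum_filter_bound (F c)
      _ ≤ 18 := htail
  have h2 : ∑ v : V9, H.degree v = 2 * H.edgeFinset.card := H.sum_degrees_eq_twice_card_edges
  rw [Set.ncard_eq_toFinset_card', show H.edgeSet.toFinset = H.edgeFinset from rfl]
  omega

def S0 : Finset V9 := {⟨0,0⟩, ⟨0,1⟩, ⟨1,0⟩, ⟨1,1⟩, ⟨2,0⟩}

/-- For `K_{3,3,3}` and `q = 6`, `ℓ_q(K_{3,3,3}) = 9`, while the maximum number of edges of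
an induced subgraph on `q − 1 = 5` vertices is `8`; in particular `ℓ_q` strictly exceeds it. -/
theorem stmt11 :
    ell (completeMultipartiteGraph fun _ : Fin 3 => Fin 3) 6 = 9 ∧
    (∀ S : Finset (Σ _ : Fin 3, Fin 3), S.card = 5 →
      ((completeMultipartiteGraph fun _ : Fin 3 => Fin 3).induce
          (S : Set (Σ _ : Fin 3, Fin 3))).edgeSet.ncard ≤ 8) ∧
    (∃ S : Finset (Σ _ : Fin 3, Fin 3), S.card = 5 ∧
      ((completeMultipartiteGraph fun _ : Fin 3 => Fin 3).induce
          (S : Set (Σ _ : Fin 3, Fin 3))).edgeSet.ncard = 8) := by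
  refine ⟨?_, ?_, ?_⟩
  · have hub : ∀ m ∈ {m | ∃ H : SimpleGraph V9, inS G3 H 6 ∧ H.edgeSet.ncard = m}, m ≤ 9 := by
      rintro m ⟨H, ⟨hle, hc, hq⟩, rfl⟩
      exact ub H hle hc hq
    have hmem : 9 ∈ {m | ∃ H : SimpleGraph V9, inS G3 H 6 ∧ H.edgeSet.ncard = m} :=
      ⟨H0, ⟨H0_le, H0_not_conn, fun C D _ => by rw [H0_supp, H0_supp]⟩, H0_card⟩
    rw [ell]
    exact le_antisymm (csSup_le' hub) (le_csSup ⟨9, hub⟩ hmem)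
  · intro S h
    rw [Set.ncard_eq_toFinset_card']
    rw [show (G3.induce (S : Set V9)).edgeSet.toFinset = (G3.induce (S : Set V9)).edgeFinset
      from rfl]
    revert h; revert S
    decide
  · refine ⟨S0, by decide, ?_⟩
    rw [Set.ncard_eq_toFinset_card']
    rw [show (G3.induce (S0 : Set V9)).edgeSet.toFinset = (G3.induce (S0 : Set V9)).edgeFinset
      from rfl]
    decide
end

section
/- Let H be a spanning subgraph of a complete multi-partite graph G of order n, and let r be a positive integer with n ≥ 5r − 2. Suppose H has at least 2 components, the second-largest component of H has order or₂(H) ≤ r, and n − (or₁(H) + or₂(H)) ≤ r. Then there exists a set S ⊆ V(H) \ V(H₁) with |S| ≤ or₂(H) − 1 such that |E(G[V(H₁) ∪ S])| ≥ |E(H)|, where H₁ is a largest component of H. -/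
open SimpleGraph

variable {V : Type} [Fintype V]

lemma orList_coe (H : SimpleGraph V) :
    letI : Fintype H.ConnectedComponent := Fintype.ofFinite _
    ((orList H : List ℕ) : Multiset ℕ) =
      ((Finset.univ : Finset H.ConnectedComponent).val.map fun C => C.supp.ncard) := by
  letI : Fintype H.ConnectedComponent := Fintype.ofFinite _
  simp only [orList]
  rw [← Multiset.coe_reverse, List.reverse_reverse]
  exact Multiset.sort_eq _ _

lemma size_le_orI2 (H : SimpleGraph V) (H₁ C : H.ConnectedComponent)
    (hne : C ≠ H₁) (hH₁ : H₁.supp.ncard = orI H 1) :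
    C.supp.ncard ≤ orI H 2 := by
  classical
  letI : Fintype H.ConnectedComponent := Fintype.ofFinite _
  have hco := orList_coe H
  have hso := orList_sorted H
  have hu : (Finset.univ : Finset H.ConnectedComponent).val
      = H₁ ::ₘ (Finset.univ : Finset H.ConnectedComponent).val.erase H₁ :=
    (Multiset.cons_erase (Finset.mem_univ H₁)).symm
  have hmem : C.supp.ncard ∈ (((Finset.univ : Finset H.ConnectedComponent).val.erase H₁).map
      fun C => C.supp.ncard) := by
    exact Multiset.mem_map_of_mem _ ((Multiset.mem_erase_of_ne hne).2 (Finset.mem_univ C))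
  match hL : orList H with
  | [] =>
      exfalso
      rw [hL] at hco
      have : C ∈ (Finset.univ : Finset H.ConnectedComponent).val := Finset.mem_univ C
      have := Multiset.mem_map_of_mem (fun C : H.ConnectedComponent => C.supp.ncard) this
      rw [← hco] at this
      simp at this
  | [a] =>
      exfalso
      rw [hL] at hco
      rw [hu, Multiset.map_cons] at hco
      have : a ::ₘ 0 = H₁.supp.ncard ::ₘ (((Finset.univ : Finset H.ConnectedComponent).val.erase H₁).map
          fun C => C.supp.ncard) := by
        rw [← hco]; rfl
      have h3 : (Multiset.map (fun C => C.supp.ncard) ((Finset.univ : Finset H.ConnectedComponent).val.erase H₁)).card = 0 := by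
        have h2 := congrArg Multiset.card this
        simp only [Multiset.card_cons, Multiset.card_zero, Multiset.card_map] at h2 ⊢
        omega
      rw [Multiset.card_eq_zero] at h3
      rw [h3] at hmem
      simp at hmem
  | a :: b :: T =>
      have ha : a = H₁.supp.ncard := by
        rw [hH₁]; simp [orI, hL]
      have horI2 : orI H 2 = b := by simp [orI, hL]
      rw [hL, hu, Multiset.map_cons] at hco
      have hco' : (b :: T : Multiset ℕ)
          = (((Finset.univ : Finset H.ConnectedComponent).val.erase H₁).map
              fun C => C.supp.ncard) := by
        have : (a :: b :: T : Multiset ℕ) = a ::ₘ (b :: T : List ℕ) := rfl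
        rw [this, ha] at hco
        exact (Multiset.cons_inj_right _).1 hco
      rw [← hco'] at hmem
      have hmem' : C.supp.ncard ∈ (b :: T : List ℕ) := by exact_mod_cast hmem
      rw [hL] at hso
      rw [horI2]
      rcases List.mem_cons.1 hmem' with h | h
      · omega
      · exact (List.pairwise_cons.1 (List.pairwise_cons.1 hso).2).1 _ h

/-- restriction of a graph to a vertex set -/
def restrictG (K : SimpleGraph V) (s : Set V) : SimpleGraph V where
  Adj u v := K.Adj u v ∧ u ∈ s ∧ v ∈ s
  symm := ⟨by rintro u v ⟨h, hu, hv⟩; exact ⟨h.symm, hv, hu⟩⟩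
  loopless := ⟨fun v h => K.loopless.irrefl v h.1⟩

def betweenG (K : SimpleGraph V) (s t : Set V) : SimpleGraph V where
  Adj u v := K.Adj u v ∧ ((u ∈ s ∧ v ∈ t) ∨ (v ∈ s ∧ u ∈ t))
  symm := ⟨by rintro u v ⟨h, h2⟩; exact ⟨h.symm, h2.symm⟩⟩
  loopless := ⟨fun v h => K.loopless.irrefl v h.1⟩

lemma edge_split (H : SimpleGraph V) (s : Set V)
    (hcl : ∀ u v, H.Adj u v → (u ∈ s ↔ v ∈ s)) :
    H.edgeSet.ncard = (restrictG H s).edgeSet.ncard + (restrictG H sᶜ).edgeSet.ncard := by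
  classical
  have hun : H.edgeSet = (restrictG H s).edgeSet ∪ (restrictG H sᶜ).edgeSet := by
    ext e
    induction e using Sym2.ind with
    | _ u v =>
      simp only [mem_edgeSet, Set.mem_union, restrictG]
      constructor
      · intro h
        by_cases hu : u ∈ s
        · exact Or.inl ⟨h, hu, (hcl u v h).1 hu⟩
        · exact Or.inr ⟨h, hu, fun hv => hu ((hcl u v h).2 hv)⟩
      · rintro (⟨h, _⟩ | ⟨h, _⟩) <;> exact h
  have hdisj : Disjoint (restrictG H s).edgeSet (restrictG H sᶜ).edgeSet := by
    rw [Set.disjoint_left]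
    intro e h1 h2
    induction e using Sym2.ind with
    | _ u v => exact h2.2.1 h1.2.1
  rw [hun, Set.ncard_union_eq hdisj (Set.toFinite _) (Set.toFinite _)]

lemma two_mul_edge_le (K : SimpleGraph V) (W : Finset V) (d : ℕ)
    (h0 : ∀ u v, K.Adj u v → u ∈ W)
    (hdeg : ∀ v ∈ W, (K.neighborSet v).ncard ≤ d) :
    2 * K.edgeSet.ncard ≤ W.card * d := by
  classical
  have hcard : K.edgeSet.ncard = K.edgeFinset.card := by
    rw [← SimpleGraph.coe_edgeFinset, Set.ncard_coe_finset]
  have hdeg' : ∀ v, K.degree v = (K.neighborSet v).ncard := by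
    intro v
    rw [Set.ncard_eq_toFinset_card']
    rfl
  have hsum := K.sum_degrees_eq_twice_card_edges
  have hzero : ∀ v ∉ W, K.degree v = 0 := by
    intro v hv
    rw [← SimpleGraph.card_neighborFinset_eq_degree, Finset.card_eq_zero,
      Finset.eq_empty_iff_forall_notMem]
    intro u hu
    rw [SimpleGraph.mem_neighborFinset] at hu
    exact hv (h0 v u hu)
  have : ∑ v : V, K.degree v = ∑ v ∈ W, K.degree v := by
    rw [← Finset.sum_subset (Finset.subset_univ W)]
    intro v _ hv
    exact hzero v hv
  calc 2 * K.edgeSet.ncard = ∑ v ∈ W, K.degree v := by rw [hcard, ← hsum, this]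
    _ ≤ ∑ v ∈ W, d := Finset.sum_le_sum (fun v hv => (hdeg' v) ▸ hdeg v hv)
    _ = W.card * d := by rw [Finset.sum_const, smul_eq_mul]

lemma edge_le_cover (K : SimpleGraph V) (W' : Finset V) (d : ℕ)
    (hcov : ∀ u v, K.Adj u v → u ∈ W' ∨ v ∈ W')
    (hdeg : ∀ v ∈ W', (K.neighborSet v).ncard ≤ d) :
    K.edgeSet.ncard ≤ W'.card * d := by
  classical
  rcases K.edgeSet.eq_empty_or_nonempty with he | he
  · simp [he]
  have hne : Nonempty (V × V) := by
    obtain ⟨e, _⟩ := he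
    induction e using Sym2.ind with
    | _ u v => exact ⟨(u, v)⟩
  let P : Sym2 V → Prop := fun e => ∃ p : V × V, p.1 ∈ W' ∧ K.Adj p.1 p.2 ∧ Sym2.mk p.1 p.2 = e
  let f : Sym2 V → V × V := fun e => if h : P e then Classical.choose h else Classical.arbitrary _
  have hP : ∀ e ∈ K.edgeSet, P e := by
    intro e he'
    induction e using Sym2.ind with
    | _ u v =>
      rw [mem_edgeSet] at he'
      rcases hcov u v he' with h | h
      · exact ⟨(u, v), h, he', rfl⟩
      · exact ⟨(v, u), h, he'.symm, Sym2.eq_swap⟩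
  have hf : ∀ e ∈ K.edgeSet, (f e).1 ∈ W' ∧ K.Adj (f e).1 (f e).2 ∧ Sym2.mk (f e).1 (f e).2 = e := by
    intro e he'
    have h := hP e he'
    simp only [f, dif_pos h]
    exact Classical.choose_spec h
  let T' : Finset (V × V) := W'.biUnion fun v =>
    (K.neighborFinset v).map ⟨fun u => (v, u), fun a b h => congrArg Prod.snd h⟩
  have hT'card : T'.card ≤ W'.card * d := by
    calc T'.card ≤ ∑ v ∈ W', ((K.neighborFinset v).map _).card := Finset.card_biUnion_le
      _ ≤ ∑ v ∈ W', d := by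
          refine Finset.sum_le_sum fun v hv => ?_
          rw [Finset.card_map, SimpleGraph.neighborFinset_def, ← Set.ncard_eq_toFinset_card']
          exact hdeg v hv
      _ = W'.card * d := by rw [Finset.sum_const, smul_eq_mul]
  have hsub : K.edgeSet.ncard ≤ T'.card := by
    rw [← Set.ncard_coe_finset]
    refine Set.ncard_le_ncard_of_injOn f ?_ ?_ (Set.toFinite _)
    · intro e he'
      obtain ⟨h1, h2, _⟩ := hf e he'
      simp only [T', Finset.coe_biUnion, Set.mem_iUnion]
      refine ⟨(f e).1, h1, ?_⟩
      simp only [Finset.coe_map, Set.mem_image, Finset.mem_coe, SimpleGraph.mem_neighborFinset,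
        Function.Embedding.coeFn_mk]
      exact ⟨(f e).2, h2, rfl⟩
    · intro e1 h1 e2 h2 heq
      rw [← (hf e1 h1).2.2, ← (hf e2 h2).2.2, heq]
  exact hsub.trans hT'card

lemma between_ncard_ge (K : SimpleGraph V) (S t : Finset V)
    (hdisj : ∀ v ∈ S, v ∉ t) (q : ℕ)
    (hq : ∀ v ∈ S, q ≤ ((t : Set V) ∩ K.neighborSet v).ncard) :
    S.card * q ≤ (betweenG K ↑S ↑t).edgeSet.ncard := by
  classical
  let tf : V → Finset V := fun v => t.filter (K.Adj v)
  have htf : ∀ v, ((tf v : Finset V) : Set V) = (t : Set V) ∩ K.neighborSet v := by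
    intro v
    ext u
    simp [tf, SimpleGraph.mem_neighborSet]
  have hqf : ∀ v ∈ S, q ≤ (tf v).card := by
    intro v hv
    rw [← Set.ncard_coe_finset, htf v]
    exact hq v hv
  let T' : Finset (V × V) := S.biUnion fun v =>
    ((tf v).map ⟨fun u => (v, u), fun a b h => congrArg Prod.snd h⟩)
  have hcard : S.card * q ≤ T'.card := by
    rw [Finset.card_biUnion]
    · calc S.card * q = ∑ _v ∈ S, q := by rw [Finset.sum_const, smul_eq_mul]
        _ ≤ ∑ v ∈ S, ((tf v).map _).card :=
            Finset.sum_le_sum fun v hv => by rw [Finset.card_map]; exact hqf v hv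
    · intro x hx y hy hxy
      simp only [Finset.disjoint_left, Finset.mem_map]
      rintro p ⟨a, _, rfl⟩ ⟨b, _, hb⟩
      exact hxy (congrArg Prod.fst hb).symm
  have hmem : ∀ p ∈ T', p.1 ∈ S ∧ p.2 ∈ t ∧ K.Adj p.1 p.2 := by
    intro p hp
    simp only [T', tf, Finset.mem_biUnion, Finset.mem_map, Finset.mem_filter,
      Function.Embedding.coeFn_mk] at hp
    obtain ⟨v, hv, u, ⟨hu, hadj⟩, rfl⟩ := hp
    exact ⟨hv, hu, hadj⟩
  refine hcard.trans ?_
  rw [← Set.ncard_coe_finset]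
  refine Set.ncard_le_ncard_of_injOn (fun p : V × V => Sym2.mk p.1 p.2) ?_ ?_ (Set.toFinite _)
  · intro p hp
    obtain ⟨h1, h2, h3⟩ := hmem p (by exact_mod_cast hp)
    rw [mem_edgeSet]
    exact ⟨h3, Or.inl ⟨h1, h2⟩⟩
  · intro p hp p' hp' heq
    obtain ⟨h1, h2, _⟩ := hmem p (by exact_mod_cast hp)
    obtain ⟨h1', h2', _⟩ := hmem p' (by exact_mod_cast hp')
    rcases Sym2.mk_eq_mk_iff.1 heq with h | h
    · exact h
    · exfalso
      have : p.1 = p'.2 := congrArg Prod.fst h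
      exact hdisj p.1 h1 (this ▸ h2')

lemma induce_edge_ncard_ge (K : SimpleGraph V) (A : Set V) (X : Set (Sym2 V))
    (hX : ∀ e ∈ X, e ∈ K.edgeSet ∧ ∀ x ∈ e, x ∈ A) :
    X.ncard ≤ (K.induce A).edgeSet.ncard := by
  classical
  have hsub : X ⊆ (Sym2.map (Subtype.val : A → V)) '' (K.induce A).edgeSet := by
    intro e he
    obtain ⟨h1, h2⟩ := hX e he
    induction e using Sym2.ind with
    | _ u v =>
      rw [mem_edgeSet] at h1
      have hu : u ∈ A := h2 u (Sym2.mem_mk_left _ _)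
      have hv : v ∈ A := h2 v (Sym2.mem_mk_right _ _)
      refine ⟨Sym2.mk ⟨u, hu⟩ ⟨v, hv⟩, ?_, ?_⟩
      · rw [mem_edgeSet]
        exact h1
      · rfl
  calc X.ncard ≤ ((Sym2.map (Subtype.val : A → V)) '' (K.induce A).edgeSet).ncard :=
        Set.ncard_le_ncard hsub (Set.toFinite _)
    _ = (K.induce A).edgeSet.ncard :=
        Set.ncard_image_of_injective _ (Sym2.map.injective Subtype.val_injective)

/-- Let `H` be a spanning subgraph of a complete multi-partite graph `G` of order
`n ≥ 5r − 2`, with at least two components, `or₂(H) ≤ r` and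
`n − (or₁(H) + or₂(H)) ≤ r`.  Then there exists `S ⊆ V(H) \ V(H₁)` with
`|S| ≤ or₂(H) − 1` and `|E(G[V(H₁) ∪ S])| ≥ |E(H)|`, where `H₁` is a largest
component of `H`. -/
theorem stmt18 (G : SimpleGraph V) (hG : IsCompMultipartite G)
    (n : ℕ) (hn : Fintype.card V = n) (r : ℕ) (hr : 1 ≤ r) (hnr : 5 * r - 2 ≤ n)
    (H : SimpleGraph V) (hHG : H ≤ G) (hdisc : ¬ H.Connected)
    (H₁ : H.ConnectedComponent) (hH₁ : H₁.supp.ncard = orI H 1)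
    (hor2 : orI H 2 ≤ r) (hgap : n - (orI H 1 + orI H 2) ≤ r) :
    ∃ S : Finset V, (∀ v ∈ S, v ∉ H₁.supp) ∧ S.card ≤ orI H 2 - 1 ∧
      H.edgeSet.ncard ≤ (G.induce (H₁.supp ∪ (S : Set V))).edgeSet.ncard := by
  classical
  set n₁ := H₁.supp.ncard with hn₁def
  set n₂ := orI H 2 with hn₂def
  -- nonempty V
  have hVpos : 0 < Fintype.card V := by omega
  have hV : Nonempty V := Fintype.card_pos_iff.1 hVpos
  -- second component exists
  obtain ⟨u, v, huv⟩ : ∃ u v : V, ¬ H.Reachable u v := by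
    by_contra h
    push_neg at h
    exact hdisc ⟨h⟩
  obtain ⟨C₀, hC₀⟩ : ∃ C : H.ConnectedComponent, C ≠ H₁ := by
    by_cases h : H.connectedComponentMk u = H₁
    · refine ⟨H.connectedComponentMk v, fun hv => huv ?_⟩
      exact SimpleGraph.ConnectedComponent.eq.mp (h.trans hv.symm)
    · exact ⟨_, h⟩
  have hsize : ∀ C : H.ConnectedComponent, C ≠ H₁ → C.supp.ncard ≤ n₂ :=
    fun C hC => size_le_orI2 H H₁ C hC hH₁
  have hsuppne : ∀ C : H.ConnectedComponent, C.supp.Nonempty := by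
    intro C
    obtain ⟨x, hx⟩ := C.exists_rep
    exact ⟨x, by rwa [SimpleGraph.ConnectedComponent.mem_supp_iff]⟩
  have hn₂1 : 1 ≤ n₂ := by
    have := hsize C₀ hC₀
    have h2 := Set.ncard_pos (Set.toFinite _) |>.2 (hsuppne C₀)
    omega
  -- W
  set W : Set V := H₁.suppᶜ with hWdef
  have hWcard : n₁ + W.ncard = n := by
    rw [hn₁def, hWdef, Set.ncard_add_ncard_compl, Nat.card_eq_fintype_card, hn]
  have hor1 : orI H 1 = n₁ := hH₁.symm
  have hnle : n ≤ n₁ + n₂ + r := by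
    rw [hor1] at hgap
    omega
  have hWle : W.ncard ≤ n₂ + r := by omega
  have hn₁ge : 3 * r - 2 ≤ n₁ := by omega
  -- parts and max
  let f : V → ℕ := fun v => ({u | ¬ G.Adj u v} ∩ H₁.supp).ncard
  obtain ⟨v₀, -, hv₀⟩ := Finset.exists_max_image (Finset.univ : Finset V) f
    Finset.univ_nonempty
  -- gain bound
  have hgain : ∀ v, G.Adj v v₀ → r ≤ (H₁.supp ∩ G.neighborSet v).ncard := by
    intro v hadj
    have hdisjp : Disjoint ({u | ¬ G.Adj u v} ∩ H₁.supp) ({u | ¬ G.Adj u v₀} ∩ H₁.supp) := by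
      rw [Set.disjoint_left]
      rintro x ⟨hx1, -⟩ ⟨hx2, -⟩
      exact hG v x v₀ (fun h => hx1 h.symm) hx2 hadj
    have hsum : f v + f v₀ ≤ n₁ := by
      rw [show f v + f v₀ = (({u | ¬ G.Adj u v} ∩ H₁.supp) ∪ ({u | ¬ G.Adj u v₀} ∩ H₁.supp)).ncard
        from (Set.ncard_union_eq hdisjp (Set.toFinite _) (Set.toFinite _)).symm]
      exact Set.ncard_le_ncard (by rintro x (⟨-, h⟩ | ⟨-, h⟩) <;> exact h) (Set.toFinite _)
    have hcov : H₁.supp ⊆ ({u | ¬ G.Adj u v} ∩ H₁.supp) ∪ (H₁.supp ∩ G.neighborSet v) := by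
      intro x hx
      by_cases h : G.Adj v x
      · exact Or.inr ⟨hx, h⟩
      · exact Or.inl ⟨fun h2 => h h2.symm, hx⟩
    have hcovcard : n₁ ≤ f v + (H₁.supp ∩ G.neighborSet v).ncard := by
      calc n₁ ≤ (({u | ¬ G.Adj u v} ∩ H₁.supp) ∪ (H₁.supp ∩ G.neighborSet v)).ncard :=
            Set.ncard_le_ncard hcov (Set.toFinite _)
        _ ≤ f v + (H₁.supp ∩ G.neighborSet v).ncard := Set.ncard_union_le _ _
    have hmax : f v ≤ f v₀ := hv₀ v (Finset.mem_univ v)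
    omega
  -- W' : vertices of W adjacent (in G) to v₀
  set W' : Finset V := Finset.univ.filter (fun v => v ∈ W ∧ G.Adj v v₀) with hW'def
  -- HB
  set HB := restrictG H W with hHBdef
  have hadjcomp : ∀ x y, H.Adj x y → H.connectedComponentMk x = H.connectedComponentMk y :=
    fun x y h => SimpleGraph.ConnectedComponent.sound h.reachable
  have hHBdeg : ∀ v, (HB.neighborSet v).ncard ≤ n₂ - 1 := by
    intro v
    by_cases hv : v ∈ W
    · have hvs : v ∉ H₁.supp := hv
      have hne : H.connectedComponentMk v ≠ H₁ := by
        intro h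
        exact hvs ((SimpleGraph.ConnectedComponent.mem_supp_iff H₁ v).2 h)
      have hsub : HB.neighborSet v ⊆ (H.connectedComponentMk v).supp \ {v} := by
        rintro u ⟨hadj, -, -⟩
        refine ⟨?_, ?_⟩
        · rw [SimpleGraph.ConnectedComponent.mem_supp_iff]
          exact (hadjcomp v u hadj).symm
        · rintro rfl
          exact H.loopless.irrefl _ hadj
      have hvmem : v ∈ (H.connectedComponentMk v).supp :=
        (SimpleGraph.ConnectedComponent.mem_supp_iff _ _).2 rfl
      calc (HB.neighborSet v).ncard ≤ ((H.connectedComponentMk v).supp \ {v}).ncard :=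
            Set.ncard_le_ncard hsub (Set.toFinite _)
        _ = (H.connectedComponentMk v).supp.ncard - 1 :=
            Set.ncard_diff_singleton_of_mem hvmem
        _ ≤ n₂ - 1 := Nat.sub_le_sub_right (hsize _ hne) 1
    · have hempty : HB.neighborSet v = ∅ := by
        ext u
        simp only [SimpleGraph.mem_neighborSet, Set.mem_empty_iff_false, iff_false]
        rintro ⟨-, h, -⟩
        exact hv h
      rw [hempty]
      simp
  -- choose S
  set s₀ := min (n₂ - 1) W'.card with hs₀def
  obtain ⟨S, hSsub, hScard⟩ := Finset.exists_subset_card_eq (s := W') (min_le_right (n₂ - 1) W'.card)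
  have hSW : ∀ v ∈ S, v ∈ W ∧ G.Adj v v₀ := by
    intro v hv
    have h := hSsub hv
    rw [hW'def, Finset.mem_filter] at h
    exact h.2
  have hSnotH₁ : ∀ v ∈ S, v ∉ H₁.supp := fun v hv => (hSW v hv).1
  -- edge split
  have hsplit := edge_split H H₁.supp (fun x y h => by
    constructor <;> intro hx <;>
      rw [SimpleGraph.ConnectedComponent.mem_supp_iff] at hx ⊢
    · rw [← hadjcomp x y h]; exact hx
    · rw [hadjcomp x y h]; exact hx)
  rw [← hWdef, ← hHBdef] at hsplit
  -- HB edge bound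
  have hEB : HB.edgeSet.ncard ≤ s₀ * r := by
    rcases le_or_gt (n₂ - 1) W'.card with hc | hc
    · have hmin : s₀ = n₂ - 1 := min_eq_left hc
      have h2e := two_mul_edge_le HB W.toFinset (n₂ - 1)
        (fun x y h => by rw [Set.mem_toFinset]; exact h.2.1)
        (fun x _ => hHBdeg x)
      have hWtf : W.toFinset.card = W.ncard := (Set.ncard_eq_toFinset_card' W).symm
      have h3 : 2 * HB.edgeSet.ncard ≤ 2 * ((n₂ - 1) * r) := by
        calc 2 * HB.edgeSet.ncard ≤ W.toFinset.card * (n₂ - 1) := h2e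
          _ = W.ncard * (n₂ - 1) := by rw [hWtf]
          _ ≤ (2 * r) * (n₂ - 1) := Nat.mul_le_mul_right _ (by omega)
          _ = 2 * ((n₂ - 1) * r) := by ring
      rw [hmin]
      omega
    · have hmin : s₀ = W'.card := min_eq_right hc.le
      have hcov : ∀ x y, HB.Adj x y → x ∈ W' ∨ y ∈ W' := by
        rintro x y ⟨hadj, hx, hy⟩
        by_contra hcon
        push_neg at hcon
        obtain ⟨hx', hy'⟩ := hcon
        rw [hW'def, Finset.mem_filter] at hx' hy'
        have hxa : ¬ G.Adj x v₀ := fun h => hx' ⟨Finset.mem_univ _, hx, h⟩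
        have hya : ¬ G.Adj y v₀ := fun h => hy' ⟨Finset.mem_univ _, hy, h⟩
        exact hG x v₀ y hxa (fun h => hya h.symm) (hHG hadj)
      have hEB2 := edge_le_cover HB W' (n₂ - 1) hcov (fun x _ => hHBdeg x)
      rw [hmin]
      calc HB.edgeSet.ncard ≤ W'.card * (n₂ - 1) := hEB2
        _ ≤ W'.card * r := Nat.mul_le_mul_left _ (by omega)
  -- the sets X₁ X₂
  set F₁ : Finset V := H₁.supp.toFinset with hF₁def
  have hF₁coe : (F₁ : Set V) = H₁.supp := Set.coe_toFinset _
  set X₁ := (restrictG G H₁.supp).edgeSet with hX₁def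
  set X₂ := (betweenG G ↑S ↑F₁).edgeSet with hX₂def
  have hX₂ge : S.card * r ≤ X₂.ncard := by
    refine between_ncard_ge G S F₁
      (fun x hx h => hSnotH₁ x hx (by rwa [hF₁def, Set.mem_toFinset] at h)) r
      (fun x hx => ?_)
    rw [hF₁coe]
    exact hgain x (hSW x hx).2
  have hX₁ge : (restrictG H H₁.supp).edgeSet.ncard ≤ X₁.ncard := by
    refine Set.ncard_le_ncard ?_ (Set.toFinite _)
    apply SimpleGraph.edgeSet_mono
    rintro a b ⟨h, ha, hb⟩
    exact ⟨hHG h, ha, hb⟩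
  have hdisjX : Disjoint X₁ X₂ := by
    rw [Set.disjoint_left]
    intro e h1 h2
    induction e using Sym2.ind with
    | _ x y =>
      rw [hX₁def, mem_edgeSet] at h1
      rw [hX₂def, mem_edgeSet] at h2
      obtain ⟨-, hx1, hy1⟩ := h1
      obtain ⟨-, h2'⟩ := h2
      rcases h2' with ⟨hs, -⟩ | ⟨hs, -⟩
      · exact hSnotH₁ x (by exact_mod_cast hs) hx1
      · exact hSnotH₁ y (by exact_mod_cast hs) hy1
  have hcup : (X₁ ∪ X₂).ncard ≤ (G.induce (H₁.supp ∪ (S : Set V))).edgeSet.ncard := by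
    apply induce_edge_ncard_ge
    intro e he
    induction e using Sym2.ind with
    | _ x y =>
      have hmemxy : ∀ z, z ∈ Sym2.mk x y → z = x ∨ z = y := by
        intro z hz
        rwa [Sym2.mem_iff] at hz
      rcases he with h1 | h2
      · rw [hX₁def, mem_edgeSet] at h1
        obtain ⟨hadj, hx1, hy1⟩ := h1
        refine ⟨mem_edgeSet _ |>.2 hadj, fun z hz => ?_⟩
        rcases hmemxy z hz with rfl | rfl
        · exact Or.inl hx1
        · exact Or.inl hy1
      · rw [hX₂def, mem_edgeSet] at h2
        obtain ⟨hadj, h2'⟩ := h2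
        refine ⟨mem_edgeSet _ |>.2 hadj, fun z hz => ?_⟩
        have hmem : ∀ w : V, w ∈ (S : Set V) ∨ w ∈ (F₁ : Set V) → w ∈ H₁.supp ∪ (S : Set V) := by
          rintro w (hw | hw)
          · exact Or.inr hw
          · rw [hF₁coe] at hw
            exact Or.inl hw
        rcases hmemxy z hz with rfl | rfl
        · rcases h2' with ⟨hs, -⟩ | ⟨-, hs⟩
          · exact hmem z (Or.inl hs)
          · exact hmem z (Or.inr hs)
        · rcases h2' with ⟨-, hs⟩ | ⟨hs, -⟩
          · exact hmem z (Or.inr hs)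
          · exact hmem z (Or.inl hs)
  have hcupeq : (X₁ ∪ X₂).ncard = X₁.ncard + X₂.ncard :=
    Set.ncard_union_eq hdisjX (Set.toFinite _) (Set.toFinite _)
  refine ⟨S, hSnotH₁, hScard.le.trans (min_le_left _ _), ?_⟩
  calc H.edgeSet.ncard
      = (restrictG H H₁.supp).edgeSet.ncard + HB.edgeSet.ncard := hsplit
    _ ≤ X₁.ncard + s₀ * r := Nat.add_le_add hX₁ge hEB
    _ = X₁.ncard + S.card * r := by rw [hScard]
    _ ≤ X₁.ncard + X₂.ncard := Nat.add_le_add_left hX₂ge _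
    _ = (X₁ ∪ X₂).ncard := hcupeq.symm
    _ ≤ _ := hcup
end
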